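/- arXiv:2104.07498 — 7 statements merged into one kernel-verified Lean document; each statement's English description precedes it below -/
import Mathlib

section
/- Let E and F be Riesz spaces and let T : E → F be a Riesz homomorphism. Then for all x, y ∈ E one has |T(x)| ≤ |T(y)| if and only if there exists w ∈ E with T(w) = 0, |w| ≤ |x| and |x − w| ≤ |y|. -/
/-!
Truncating `x` to the order interval `[-|y|, |y|]` gives an element `z` between `0` and `x` with
`|z| ≤ |y|`, so `w := x - z` also lies between `0` and `x`. Since `T` preserves the lattice
operations, `T z` is the truncation of `T x` to `[-|T y|, |T y|]`, which is `T x` itself when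
`|T x| ≤ |T y|`; hence `T w = 0`. Conversely `|T x| = |T (x - w)| = T |x - w| ≤ T |y| = |T y|`.
-/

section LatticeOrderedGroup

variable {α : Type*} [AddCommGroup α] [Lattice α] [AddLeftMono α] {a b u x : α}

theorem abs_le_abs_of_mem_uIcc_zero (h : u ∈ Set.uIcc 0 a) : |u| ≤ |a| := by
  refine abs_le'.2 ⟨h.2.trans (sup_le (abs_nonneg a) (le_abs_self a)), ?_⟩
  calc -u ≤ -(0 ⊓ a) := neg_le_neg_iff.2 h.1
    _ = 0 ⊔ -a := by rw [neg_inf, neg_zero]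
    _ ≤ |a| := sup_le (abs_nonneg a) (neg_le_abs a)

theorem sub_mem_uIcc_zero (h : u ∈ Set.uIcc 0 a) : a - u ∈ Set.uIcc 0 a := by
  constructor
  · simpa [sub_sup, inf_comm] using sub_le_sub_left h.2 a
  · simpa [sub_inf, sup_comm] using sub_le_sub_left h.1 a

def clamp (b x : α) : α := (x ⊔ -b) ⊓ b

theorem abs_clamp_le (hb : 0 ≤ b) (x : α) : |clamp b x| ≤ b := by
  refine abs_le'.2 ⟨inf_le_right, ?_⟩
  rw [clamp, neg_inf, neg_sup, neg_neg]
  exact sup_le inf_le_right (neg_le_self hb)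

theorem clamp_mem_uIcc_zero (hb : 0 ≤ b) (x : α) : clamp b x ∈ Set.uIcc 0 x :=
  ⟨le_inf (inf_le_right.trans le_sup_left) (inf_le_left.trans hb),
    inf_le_left.trans (sup_le le_sup_right ((neg_nonpos.2 hb).trans le_sup_left))⟩

theorem clamp_eq_self_of_abs_le (h : |x| ≤ b) : clamp b x = x := by
  obtain ⟨hxb, hnxb⟩ := abs_le'.1 h
  rw [clamp, sup_eq_left.2 (neg_le.1 hnxb), inf_eq_left.2 hxb]

end LatticeOrderedGroup

section MapSup

variable {α β G : Type*} [AddCommGroup α] [Lattice α] [AddCommGroup β] [Lattice β]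
  [FunLike G α β] [AddMonoidHomClass G α β] {f : G}

theorem map_abs_of_map_sup (hf : ∀ a b, f (a ⊔ b) = f a ⊔ f b) (a : α) : f |a| = |f a| := by
  rw [abs, hf, map_neg, abs]

variable [AddLeftMono α] [AddLeftMono β]

theorem map_inf_of_map_sup (hf : ∀ a b, f (a ⊔ b) = f a ⊔ f b) (a b : α) :
    f (a ⊓ b) = f a ⊓ f b := by
  rw [← neg_neg (a ⊓ b), neg_inf, map_neg, hf, map_neg, map_neg, neg_sup, neg_neg, neg_neg]

theorem map_clamp_of_map_sup (hf : ∀ a b, f (a ⊔ b) = f a ⊔ f b) (b x : α) :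
    f (clamp b x) = clamp (f b) (f x) := by
  rw [clamp, clamp, map_inf_of_map_sup hf, hf, map_neg]

end MapSup

theorem stmt_1_general {E F : Type*}
    [AddCommGroup E] [Lattice E] [Module ℝ E]
    [CovariantClass E E (· + ·) (· ≤ ·)]
    [AddCommGroup F] [Lattice F] [Module ℝ F]
    [CovariantClass F F (· + ·) (· ≤ ·)]
    (T : E →ₗ[ℝ] F) (hT : ∀ x y : E, T (x ⊔ y) = T x ⊔ T y) :
    ∀ x y : E, |T x| ≤ |T y| ↔ ∃ w : E, T w = 0 ∧ |w| ≤ |x| ∧ |x - w| ≤ |y| := by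
  intro x y
  constructor
  · intro hxy
    have hz := clamp_mem_uIcc_zero (abs_nonneg y) x
    refine ⟨x - clamp |y| x, ?_, abs_le_abs_of_mem_uIcc_zero (sub_mem_uIcc_zero hz), ?_⟩
    · rw [map_sub, map_clamp_of_map_sup hT, map_abs_of_map_sup hT,
        clamp_eq_self_of_abs_le hxy, sub_self]
    · rw [sub_sub_cancel]
      exact abs_clamp_le (abs_nonneg y) x
  · rintro ⟨w, hw, -, hxw⟩
    calc |T x| = T |x - w| := by rw [map_abs_of_map_sup hT, map_sub, hw, sub_zero]
      _ ≤ T |y| := OrderHomClass.mono (SupHom.mk T hT) hxw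
      _ = |T y| := map_abs_of_map_sup hT y

/-- For a Riesz homomorphism `T : E → F`: `|T x| ≤ |T y|` iff
there is `w` in the kernel with `|w| ≤ |x|` and `|x - w| ≤ |y|`. -/
theorem stmt_1 {E F : Type*}
    [AddCommGroup E] [Lattice E] [Module ℝ E]
    [CovariantClass E E (· + ·) (· ≤ ·)] [PosSMulMono ℝ E]
    [AddCommGroup F] [Lattice F] [Module ℝ F]
    [CovariantClass F F (· + ·) (· ≤ ·)] [PosSMulMono ℝ F]
    (T : E →ₗ[ℝ] F) (hT : ∀ x y : E, T (x ⊔ y) = T x ⊔ T y) :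
    ∀ x y : E, |T x| ≤ |T y| ↔ ∃ w : E, T w = 0 ∧ |w| ≤ |x| ∧ |x - w| ≤ |y| :=
  stmt_1_general T hT
end

section
/- Let E and F be Riesz spaces and let T : E → F be a surjective Riesz homomorphism. Then the following are equivalent: (1) T is a Riesz σ-homomorphism, i.e., whenever x is the supremum in E of a sequence (xₙ), then T(x) is the supremum in F of (T(xₙ)); (2) for every σ-ideal A of F, the preimage T⁻¹(A) is a σ-ideal of E; (3) the kernel of T is a σ-ideal of E. -/
/-!
Only (3) ⇒ (1) needs an idea. Let `xₙ` have supremum `x` in `E` and let `T y` be an upper bound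
of the `T xₙ` (every element of `F` has this form by surjectivity). With `wₙ = x₀ ⊔ ⋯ ⊔ xₙ`, the
elements `dₙ = (wₙ ⊔ y) - y` form an increasing nonnegative sequence in `ker T` whose supremum is
`(x ⊔ y) - y`; if `ker T` is a σ-ideal, then `T x ⊔ T y - T y = 0`, i.e. `T x ≤ T y`.
-/

open Set

/-- Only the order conditions of a σ-ideal; being a subspace is not part of the definition. -/
def IsSigmaIdeal {E : Type*} [AddCommGroup E] [Lattice E] (A : Set E) : Prop :=
  (∀ x y : E, |x| ≤ |y| → y ∈ A → x ∈ A) ∧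
    ∀ (u : ℕ → E) (x : E), (∀ n, u n ∈ A) → (∀ n, 0 ≤ u n) → Monotone u →
      IsLUB (range u) x → x ∈ A

theorem IsLUB.range_sup_const {ι α : Type*} [Nonempty ι] [SemilatticeSup α] {f : ι → α} {a : α}
    (h : IsLUB (range f) a) (b : α) : IsLUB (range fun i => f i ⊔ b) (a ⊔ b) := by
  refine ⟨?_, fun c hc => sup_le (h.2 ?_) ?_⟩
  · rintro _ ⟨i, rfl⟩
    exact sup_le_sup_right (h.1 ⟨i, rfl⟩) b
  · rintro _ ⟨i, rfl⟩
    exact le_sup_left.trans (hc ⟨i, rfl⟩)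
  · obtain ⟨i⟩ := ‹Nonempty ι›
    exact le_sup_right.trans (hc ⟨i, rfl⟩)

theorem IsLUB.range_sub_const {ι α : Type*} [AddGroup α] [PartialOrder α] [AddRightMono α]
    {f : ι → α} {a : α} (h : IsLUB (range f) a) (b : α) :
    IsLUB (range fun i => f i - b) (a - b) := by
  have := (OrderIso.subRight b).isLUB_image'.2 h
  rwa [← range_comp] at this

theorem IsLUB.range_partialSups {α : Type*} [SemilatticeSup α] {f : ℕ → α} {a : α}
    (h : IsLUB (range f) a) : IsLUB (range (partialSups f)) a := by
  rwa [IsLUB, upperBounds_range_partialSups]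

theorem monotone_of_map_sup {α β : Type*} [SemilatticeSup α] [SemilatticeSup β] {f : α → β}
    (hf : ∀ x y, f (x ⊔ y) = f x ⊔ f y) : Monotone f :=
  fun a b hab => le_sup_left.trans_eq (by rw [← hf, sup_eq_right.2 hab])

theorem isSigmaIdeal_zero {E : Type*} [AddCommGroup E] [Lattice E] [AddLeftMono E] :
    IsSigmaIdeal ({0} : Set E) := by
  refine ⟨fun x y hxy hy => ?_, fun u x hu _ _ hx => ?_⟩
  · rw [mem_singleton_iff] at hy ⊢
    rw [hy, abs_zero] at hxy
    exact le_antisymm ((le_abs_self x).trans hxy) (neg_nonpos.1 ((neg_le_abs x).trans hxy))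
  · have hu0 : u = fun _ => 0 := funext hu
    rw [hu0, range_const] at hx
    exact hx.unique isLUB_singleton

section LatticeHom

variable {E F G : Type*} [AddCommGroup E] [Lattice E] [AddCommGroup F] [Lattice F]
  [FunLike G E F] [AddMonoidHomClass G E F] {T : G}

theorem map_abs_of_map_sup_s8 (hT : ∀ x y : E, T (x ⊔ y) = T x ⊔ T y) (a : E) : T |a| = |T a| := by
  rw [abs, abs, hT, map_neg]

theorem IsSigmaIdeal.preimage {A : Set F} (hA : IsSigmaIdeal A)
    (hT : ∀ x y : E, T (x ⊔ y) = T x ⊔ T y)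
    (hσ : ∀ (u : ℕ → E) (x : E), IsLUB (range u) x → IsLUB (range fun n => T (u n)) (T x)) :
    IsSigmaIdeal (T ⁻¹' A) := by
  have hmono := monotone_of_map_sup hT
  refine ⟨fun x y hxy hy => hA.1 (T x) (T y) ?_ hy, fun u x hu hpos hu_mono hx => ?_⟩
  · simpa only [map_abs_of_map_sup_s8 hT] using hmono hxy
  · exact hA.2 _ _ hu (fun n => map_zero T ▸ hmono (hpos n)) (hmono.comp hu_mono) (hσ u x hx)

theorem isLUB_map_of_isSigmaIdeal_ker [AddLeftMono E] (hT : ∀ x y : E, T (x ⊔ y) = T x ⊔ T y)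
    (hsurj : Function.Surjective T) (hker : IsSigmaIdeal (T ⁻¹' {0})) {u : ℕ → E} {x : E}
    (hx : IsLUB (range u) x) : IsLUB (range fun n => T (u n)) (T x) := by
  have hmono := monotone_of_map_sup hT
  refine ⟨?_, fun z hz => ?_⟩
  · rintro _ ⟨n, rfl⟩
    exact hmono (hx.1 ⟨n, rfl⟩)
  obtain ⟨y, rfl⟩ := hsurj z
  let w := partialSups u
  have hTw : ∀ n, T (w n) ≤ T y := fun n =>
    calc T (w n) = partialSups (fun k => T (u k)) n := (map_partialSups (SupHom.mk T hT) u n).symm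
      _ ≤ T y := partialSups_le _ _ _ fun k _ => hz ⟨k, rfl⟩
  have hd_ker : ∀ n, w n ⊔ y - y ∈ T ⁻¹' {0} := fun n => by
    simp only [mem_preimage, mem_singleton_iff, map_sub, hT, sup_eq_right.2 (hTw n), sub_self]
  have hd_lub : IsLUB (range fun n => w n ⊔ y - y) (x ⊔ y - y) :=
    (hx.range_partialSups.range_sup_const y).range_sub_const y
  have hx_ker := hker.2 _ _ hd_ker (fun n => sub_nonneg.2 le_sup_right)
    (fun m n hmn => sub_le_sub_right (sup_le_sup_right (partialSups_monotone u hmn) y) y) hd_lub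
  simpa only [mem_preimage, mem_singleton_iff, map_sub, hT, sub_eq_zero, sup_eq_right] using hx_ker

end LatticeHom

theorem stmt_8_general {E F : Type*}
    [AddCommGroup E] [Lattice E] [Module ℝ E]
    [CovariantClass E E (· + ·) (· ≤ ·)]
    [AddCommGroup F] [Lattice F] [Module ℝ F]
    [CovariantClass F F (· + ·) (· ≤ ·)]
    (T : E →ₗ[ℝ] F) (hT : ∀ x y : E, T (x ⊔ y) = T x ⊔ T y)
    (hsurj : Function.Surjective T) :
    List.TFAE [
      -- (1) `T` is a Riesz σ-homomorphism
      ∀ (u : ℕ → E) (x : E), IsLUB (Set.range u) x →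
        IsLUB (Set.range fun n => T (u n)) (T x),
      -- (2) preimages of σ-ideals are σ-ideals
      ∀ A : Submodule ℝ F,
        ((∀ x y : F, |x| ≤ |y| → y ∈ A → x ∈ A) ∧
          (∀ (u : ℕ → F) (x : F), (∀ n, u n ∈ A) → (∀ n, 0 ≤ u n) → Monotone u →
            IsLUB (Set.range u) x → x ∈ A)) →
        ((∀ x y : E, |x| ≤ |y| → y ∈ A.comap T → x ∈ A.comap T) ∧
          (∀ (u : ℕ → E) (x : E), (∀ n, u n ∈ A.comap T) → (∀ n, 0 ≤ u n) →
            Monotone u → IsLUB (Set.range u) x → x ∈ A.comap T)),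
      -- (3) the kernel of `T` is a σ-ideal
      (∀ x y : E, |x| ≤ |y| → y ∈ LinearMap.ker T → x ∈ LinearMap.ker T) ∧
        (∀ (u : ℕ → E) (x : E), (∀ n, u n ∈ LinearMap.ker T) → (∀ n, 0 ≤ u n) →
          Monotone u → IsLUB (Set.range u) x → x ∈ LinearMap.ker T)] := by
  tfae_have 1 → 2 := fun hσ A hA => IsSigmaIdeal.preimage hA hT hσ
  tfae_have 2 → 3 := fun h => h ⊥ isSigmaIdeal_zero
  tfae_have 3 → 1 := fun hker _ _ hx => isLUB_map_of_isSigmaIdeal_ker hT hsurj hker hx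
  tfae_finish

/-- For a surjective Riesz homomorphism `T : E → F`, TFAE:
(1) `T` is a Riesz σ-homomorphism;
(2) the preimage of every σ-ideal of `F` is a σ-ideal of `E`;
(3) the kernel of `T` is a σ-ideal of `E`. -/
theorem stmt_8 {E F : Type*}
    [AddCommGroup E] [Lattice E] [Module ℝ E]
    [CovariantClass E E (· + ·) (· ≤ ·)] [PosSMulMono ℝ E]
    [AddCommGroup F] [Lattice F] [Module ℝ F]
    [CovariantClass F F (· + ·) (· ≤ ·)] [PosSMulMono ℝ F]
    (T : E →ₗ[ℝ] F) (hT : ∀ x y : E, T (x ⊔ y) = T x ⊔ T y)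
    (hsurj : Function.Surjective T) :
    List.TFAE [
      -- (1) `T` is a Riesz σ-homomorphism
      ∀ (u : ℕ → E) (x : E), IsLUB (Set.range u) x →
        IsLUB (Set.range fun n => T (u n)) (T x),
      -- (2) preimages of σ-ideals are σ-ideals
      ∀ A : Submodule ℝ F,
        ((∀ x y : F, |x| ≤ |y| → y ∈ A → x ∈ A) ∧
          (∀ (u : ℕ → F) (x : F), (∀ n, u n ∈ A) → (∀ n, 0 ≤ u n) → Monotone u →
            IsLUB (Set.range u) x → x ∈ A)) →
        ((∀ x y : E, |x| ≤ |y| → y ∈ A.comap T → x ∈ A.comap T) ∧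
          (∀ (u : ℕ → E) (x : E), (∀ n, u n ∈ A.comap T) → (∀ n, 0 ≤ u n) →
            Monotone u → IsLUB (Set.range u) x → x ∈ A.comap T)),
      -- (3) the kernel of `T` is a σ-ideal
      (∀ x y : E, |x| ≤ |y| → y ∈ LinearMap.ker T → x ∈ LinearMap.ker T) ∧
        (∀ (u : ℕ → E) (x : E), (∀ n, u n ∈ LinearMap.ker T) → (∀ n, 0 ≤ u n) →
          Monotone u → IsLUB (Set.range u) x → x ∈ LinearMap.ker T)] :=
  stmt_8_general T hT hsurj
end

section
/- Let E and F be Riesz spaces and let T : E → F be a surjective Riesz homomorphism. If E is uniformly complete, then F is uniformly complete; that is, the Riesz homomorphic image of a uniformly complete Riesz space is uniformly complete. -/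
/-!
A `w`-uniform Cauchy sequence in `F` has a subsequence `v` with
`|v (k + 1) - v k| ≤ 2⁻ᵏ • w`. Choose `w₀ ≥ 0` in `E` with `T w₀ = w`. Clamping preimages of
the differences into `[-2⁻ᵏ • w₀, 2⁻ᵏ • w₀]` does not change their images, because `T` preserves
`⊔` and `⊓`; so their partial sums form a `w₀`-uniform Cauchy sequence in `E` lying over `v`.
Its limit in `E` maps to a `w`-uniform limit of `v`, hence of the whole Cauchy sequence.
-/

open Finset

section UniformConvergence

variable {E : Type*} [AddCommGroup E] [Lattice E] [Module ℝ E]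

def IsUniformCauchy (w : E) (u : ℕ → E) : Prop :=
  ∀ ε : ℝ, 0 < ε → ∃ N : ℕ, ∀ m ≥ N, ∀ n ≥ N, |u m - u n| ≤ ε • w

def UniformTendsto (w : E) (u : ℕ → E) (x : E) : Prop :=
  ∀ ε : ℝ, 0 < ε → ∃ N : ℕ, ∀ n ≥ N, |x - u n| ≤ ε • w

variable (E) in
def UniformlyComplete : Prop :=
  ∀ w : E, 0 ≤ w → ∀ u : ℕ → E, IsUniformCauchy w u → ∃ x, UniformTendsto w u x

theorem IsUniformCauchy.exists_strictMono_abs_sub_succ_le_geometric {w : E} {u : ℕ → E}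
    (hu : IsUniformCauchy w u) :
    ∃ φ : ℕ → ℕ, StrictMono φ ∧ ∀ k, |u (φ (k + 1)) - u (φ k)| ≤ ((1 / 2 : ℝ) ^ k) • w := by
  choose N hN using fun k : ℕ => hu ((1 / 2 : ℝ) ^ k) (by positivity)
  obtain ⟨φ, hφ, hφN⟩ := Filter.extraction_forall_of_eventually' (P := fun k n => N k ≤ n)
    fun k => ⟨N k, fun _ => id⟩
  exact ⟨φ, hφ, fun k => hN k _ ((hφN k).trans (hφ.monotone k.le_succ)) _ (hφN k)⟩

variable [IsOrderedAddMonoid E]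

theorem IsUniformCauchy.uniformTendsto_of_subseq {w : E} {u : ℕ → E} {φ : ℕ → ℕ} {x : E}
    (hu : IsUniformCauchy w u) (hφ : StrictMono φ) (hx : UniformTendsto w (u ∘ φ) x) :
    UniformTendsto w u x := by
  intro ε hε
  obtain ⟨K, hK⟩ := hx (ε / 2) (half_pos hε)
  obtain ⟨N, hN⟩ := hu (ε / 2) (half_pos hε)
  set k := max K N
  have hφk : N ≤ φ k := (le_max_right K N).trans hφ.le_apply
  refine ⟨φ k, fun n hn => ?_⟩
  calc |x - u n| = |(x - u (φ k)) + (u (φ k) - u n)| := by rw [sub_add_sub_cancel]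
    _ ≤ |x - u (φ k)| + |u (φ k) - u n| := abs_add_le _ _
    _ ≤ (ε / 2) • w + (ε / 2) • w :=
        add_le_add (hK k (le_max_left K N)) (hN _ hφk n (hφk.trans hn))
    _ = ε • w := by rw [← add_smul, add_halves]

variable [PosSMulMono ℝ E]

theorem abs_sub_le_of_abs_sub_succ_le_geometric {w : E} {s : ℕ → E} (hw : 0 ≤ w)
    (hs : ∀ k, |s (k + 1) - s k| ≤ ((1 / 2 : ℝ) ^ k) • w) {k l : ℕ} (hkl : k ≤ l) :
    |s l - s k| ≤ (2 * (1 / 2 : ℝ) ^ k) • w := by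
  suffices |s l - s k| ≤ (2 * (1 / 2 : ℝ) ^ k - 2 * (1 / 2 : ℝ) ^ l) • w from
    this.trans <| smul_le_smul_of_nonneg_right
      (by linarith [pow_nonneg (by norm_num : (0 : ℝ) ≤ 1 / 2) l]) hw
  induction l, hkl using Nat.le_induction with
  | base => simp
  | succ l _ ih =>
    calc |s (l + 1) - s k| = |(s (l + 1) - s l) + (s l - s k)| := by rw [sub_add_sub_cancel]
      _ ≤ |s (l + 1) - s l| + |s l - s k| := abs_add_le _ _
      _ ≤ ((1 / 2 : ℝ) ^ l) • w + (2 * (1 / 2 : ℝ) ^ k - 2 * (1 / 2 : ℝ) ^ l) • w :=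
          add_le_add (hs l) ih
      _ = (2 * (1 / 2 : ℝ) ^ k - 2 * (1 / 2 : ℝ) ^ (l + 1)) • w := by rw [← add_smul]; ring_nf

theorem isUniformCauchy_of_abs_sub_succ_le_geometric {w : E} {s : ℕ → E} (hw : 0 ≤ w)
    (hs : ∀ k, |s (k + 1) - s k| ≤ ((1 / 2 : ℝ) ^ k) • w) : IsUniformCauchy w s := by
  intro ε hε
  obtain ⟨K, hK⟩ :=
    exists_pow_lt_of_lt_one (by positivity : 0 < ε / 4) (by norm_num : (1 / 2 : ℝ) < 1)
  refine ⟨K, fun m hm n hn => ?_⟩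
  calc |s m - s n| = |(s m - s K) + (s K - s n)| := by rw [sub_add_sub_cancel]
    _ ≤ |s m - s K| + |s n - s K| := by rw [abs_sub_comm (s n)]; exact abs_add_le _ _
    _ ≤ (2 * (1 / 2 : ℝ) ^ K) • w + (2 * (1 / 2 : ℝ) ^ K) • w :=
        add_le_add (abs_sub_le_of_abs_sub_succ_le_geometric hw hs hm)
          (abs_sub_le_of_abs_sub_succ_le_geometric hw hs hn)
    _ ≤ ε • w := by rw [← add_smul]; exact smul_le_smul_of_nonneg_right (by linarith) hw

end UniformConvergence

section RieszHom

variable {E F : Type*} [Lattice E] [Lattice F]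

theorem monotone_of_map_sup_s9 {f : E → F} (hf : ∀ x y, f (x ⊔ y) = f x ⊔ f y) : Monotone f :=
  fun a b hab => by rw [← sup_eq_right.2 hab, hf]; exact le_sup_left

variable [AddCommGroup E] [AddCommGroup F]

theorem map_abs_of_map_sup_s9 {H : Type*} [FunLike H E F] [AddMonoidHomClass H E F] {f : H}
    (hf : ∀ x y, f (x ⊔ y) = f x ⊔ f y) (x : E) : f |x| = |f x| := by
  change f (x ⊔ -x) = f x ⊔ -f x
  rw [hf, map_neg]

theorem UniformTendsto.map_of_map_sup [Module ℝ E] [Module ℝ F] (T : E →ₗ[ℝ] F)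
    (hT : ∀ x y, T (x ⊔ y) = T x ⊔ T y) {w : E} {u : ℕ → E} {x : E} (hx : UniformTendsto w u x) :
    UniformTendsto (T w) (T ∘ u) (T x) := by
  intro ε hε
  obtain ⟨N, hN⟩ := hx ε hε
  refine ⟨N, fun n hn => ?_⟩
  calc |T x - T (u n)| = T |x - u n| := by rw [map_abs_of_map_sup_s9 hT, map_sub]
    _ ≤ T (ε • w) := monotone_of_map_sup_s9 hT (hN n hn)
    _ = ε • T w := T.map_smul ε w

variable [IsOrderedAddMonoid E] [IsOrderedAddMonoid F]
  {H : Type*} [FunLike H E F] [AddMonoidHomClass H E F] {f : H}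

theorem map_inf_of_map_sup_s9 (hf : ∀ x y, f (x ⊔ y) = f x ⊔ f y) (x y : E) :
    f (x ⊓ y) = f x ⊓ f y := by
  rw [← neg_neg (x ⊓ y), ← neg_neg (f x ⊓ f y), neg_inf, neg_inf, map_neg, hf, map_neg, map_neg]

theorem exists_nonneg_map_eq_of_map_sup (hf : ∀ x y, f (x ⊔ y) = f x ⊔ f y)
    (hsurj : Function.Surjective f) {y : F} (hy : 0 ≤ y) : ∃ a, 0 ≤ a ∧ f a = y := by
  obtain ⟨x, rfl⟩ := hsurj y
  exact ⟨|x|, abs_nonneg x, by rw [map_abs_of_map_sup_s9 hf, abs_of_nonneg hy]⟩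

theorem exists_map_eq_abs_le_of_map_sup (hf : ∀ x y, f (x ⊔ y) = f x ⊔ f y)
    (hsurj : Function.Surjective f) {a : E} (ha : 0 ≤ a) {y : F} (hy : |y| ≤ f a) :
    ∃ x, f x = y ∧ |x| ≤ a := by
  obtain ⟨x, rfl⟩ := hsurj y
  obtain ⟨hle, hneg⟩ := abs_le'.1 hy
  refine ⟨(x ⊔ -a) ⊓ a, ?_,
    abs_le'.2 ⟨inf_le_right, neg_le.1 (le_inf le_sup_right (neg_le_self ha))⟩⟩
  rw [map_inf_of_map_sup_s9 hf, hf, map_neg, sup_eq_left.2 (neg_le.1 hneg), inf_eq_left.2 hle]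

end RieszHom

section Completeness

variable {E F : Type*} [AddCommGroup E] [Lattice E] [IsOrderedAddMonoid E] [Module ℝ E]
  [PosSMulMono ℝ E] [AddCommGroup F] [Lattice F] [IsOrderedAddMonoid F] [Module ℝ F]
  (T : E →ₗ[ℝ] F) (hT : ∀ x y, T (x ⊔ y) = T x ⊔ T y) (hsurj : Function.Surjective T)
include hT hsurj

theorem UniformlyComplete.exists_uniformTendsto_of_abs_sub_succ_le_geometric
    (hE : UniformlyComplete E) {w : F} (hw : 0 ≤ w) {v : ℕ → F}
    (hv : ∀ k, |v (k + 1) - v k| ≤ ((1 / 2 : ℝ) ^ k) • w) : ∃ x, UniformTendsto w v x := by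
  obtain ⟨w₀, hw₀, rfl⟩ := exists_nonneg_map_eq_of_map_sup hT hsurj hw
  have hlift (k : ℕ) : ∃ e, T e = v (k + 1) - v k ∧ |e| ≤ ((1 / 2 : ℝ) ^ k) • w₀ :=
    exists_map_eq_abs_le_of_map_sup hT hsurj (smul_nonneg (by positivity) hw₀)
      (by rw [T.map_smul]; exact hv k)
  choose e hTe he using hlift
  obtain ⟨v₀, hv₀⟩ := hsurj (v 0)
  set s : ℕ → E := fun k => v₀ + ∑ j ∈ range k, e j
  have hs (k : ℕ) : |s (k + 1) - s k| ≤ ((1 / 2 : ℝ) ^ k) • w₀ := by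
    simpa [s, sum_range_succ] using he k
  have hTs : T ∘ s = v := funext fun k => by
    simp only [s, Function.comp_apply, map_add, map_sum, hTe, sum_range_sub, hv₀, add_sub_cancel]
  obtain ⟨x, hx⟩ := hE w₀ hw₀ s (isUniformCauchy_of_abs_sub_succ_le_geometric hw₀ hs)
  exact ⟨T x, hTs ▸ hx.map_of_map_sup T hT⟩

theorem UniformlyComplete.of_surjective_of_map_sup (hE : UniformlyComplete E) :
    UniformlyComplete F := by
  intro w hw u hu
  obtain ⟨φ, hφ, hgeom⟩ := hu.exists_strictMono_abs_sub_succ_le_geometric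
  obtain ⟨x, hx⟩ :=
    hE.exists_uniformTendsto_of_abs_sub_succ_le_geometric T hT hsurj hw (v := u ∘ φ) hgeom
  exact ⟨x, hu.uniformTendsto_of_subseq hφ hx⟩

end Completeness

theorem stmt_9_general {E F : Type*}
    [AddCommGroup E] [Lattice E] [Module ℝ E]
    [CovariantClass E E (· + ·) (· ≤ ·)] [PosSMulMono ℝ E]
    [AddCommGroup F] [Lattice F] [Module ℝ F]
    [CovariantClass F F (· + ·) (· ≤ ·)]
    (T : E →ₗ[ℝ] F) (hT : ∀ x y : E, T (x ⊔ y) = T x ⊔ T y)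
    (hsurj : Function.Surjective T)
    -- `E` is uniformly complete
    (hE : ∀ w : E, 0 ≤ w → ∀ u : ℕ → E,
      (∀ ε : ℝ, 0 < ε → ∃ N : ℕ, ∀ m ≥ N, ∀ n ≥ N, |u m - u n| ≤ ε • w) →
      ∃ x : E, ∀ ε : ℝ, 0 < ε → ∃ N : ℕ, ∀ n ≥ N, |x - u n| ≤ ε • w) :
    -- `F` is uniformly complete
    ∀ w : F, 0 ≤ w → ∀ u : ℕ → F,
      (∀ ε : ℝ, 0 < ε → ∃ N : ℕ, ∀ m ≥ N, ∀ n ≥ N, |u m - u n| ≤ ε • w) →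
      ∃ x : F, ∀ ε : ℝ, 0 < ε → ∃ N : ℕ, ∀ n ≥ N, |x - u n| ≤ ε • w := by
  have : IsOrderedAddMonoid E := { add_le_add_left := fun _ _ h c ↦ add_le_add_left h c }
  have : IsOrderedAddMonoid F := { add_le_add_left := fun _ _ h c ↦ add_le_add_left h c }
  exact UniformlyComplete.of_surjective_of_map_sup T hT hsurj hE

/-- If `T : E → F` is a surjective Riesz homomorphism and `E` is
uniformly complete, then `F` is uniformly complete. -/
theorem stmt_9 {E F : Type*}
    [AddCommGroup E] [Lattice E] [Module ℝ E]
    [CovariantClass E E (· + ·) (· ≤ ·)] [PosSMulMono ℝ E]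
    [AddCommGroup F] [Lattice F] [Module ℝ F]
    [CovariantClass F F (· + ·) (· ≤ ·)] [PosSMulMono ℝ F]
    (T : E →ₗ[ℝ] F) (hT : ∀ x y : E, T (x ⊔ y) = T x ⊔ T y)
    (hsurj : Function.Surjective T)
    -- `E` is uniformly complete
    (hE : ∀ w : E, 0 ≤ w → ∀ u : ℕ → E,
      (∀ ε : ℝ, 0 < ε → ∃ N : ℕ, ∀ m ≥ N, ∀ n ≥ N, |u m - u n| ≤ ε • w) →
      ∃ x : E, ∀ ε : ℝ, 0 < ε → ∃ N : ℕ, ∀ n ≥ N, |x - u n| ≤ ε • w) :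
    -- `F` is uniformly complete
    ∀ w : F, 0 ≤ w → ∀ u : ℕ → F,
      (∀ ε : ℝ, 0 < ε → ∃ N : ℕ, ∀ m ≥ N, ∀ n ≥ N, |u m - u n| ≤ ε • w) →
      ∃ x : F, ∀ ε : ℝ, 0 < ε → ∃ N : ℕ, ∀ n ≥ N, |x - u n| ≤ ε • w :=
  stmt_9_general T hT hsurj hE
end

section
/- Let A be an ideal of a Riesz space E and let E/A be the quotient Riesz space. Then the following are equivalent: (1) E/A is Archimedean; (2) A is uniformly closed, i.e., whenever a sequence in A converges relatively uniformly to some x ∈ E, then x ∈ A; (3) whenever (xₙ) is an increasing sequence of nonnegative elements of A that converges relatively uniformly to x ∈ E, then x ∈ A; (4) whenever x, w ∈ E with x ≥ 0, w ≥ 0 and (n • x − w)⁺ ∈ A for every natural number n, then x ∈ A. -/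
/-!
In the quotient, `[x] ≤ [y]` holds exactly when `(x - y)⁺ ∈ A`, because `A` is solid; so the
Archimedean property of `E ⧸ A` is condition (4) read in `E`. For (4) ⇒ (2): if
`|x - u N| ≤ w / (n + 1)` then `(n • |x| - w)⁺ ≤ (n + 1) • |u N| ∈ A`. For (3) ⇒ (4): the sequence
`(x - w / (n + 1))⁺ = ((n + 1) • x - w)⁺ / (n + 1)` lies in `A`, increases, and converges to `x`
relatively uniformly with regulator `w`.
-/

open LatticeOrderedAddCommGroup

section PosPartSMul

variable {E : Type*} [AddCommGroup E] [Lattice E] [Module ℝ E] [PosSMulMono ℝ E]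

theorem posPart_smul_of_pos {c : ℝ} (hc : 0 < c) (a : E) : (c • a)⁺ = c • a⁺ := by
  have h := (OrderIso.smulRight hc : E ≃o E).map_sup a 0
  simp only [OrderIso.smulRight_apply, smul_zero] at h
  exact h.symm

theorem posPart_sub_inv_succ_smul (x w : E) (n : ℕ) :
    (x - ((n : ℝ) + 1)⁻¹ • w)⁺ = ((n : ℝ) + 1)⁻¹ • ((n + 1) • x - w)⁺ := by
  rw [← posPart_smul_of_pos (by positivity), smul_sub, ← Nat.cast_smul_eq_nsmul ℝ, smul_smul,
    Nat.cast_succ, inv_mul_cancel₀ (by positivity), one_smul]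

end PosPartSMul

section LatticeOrderedAddCommGroup

variable {E : Type*} [AddCommGroup E] [Lattice E] [IsOrderedAddMonoid E]

theorem LatticeOrderedAddCommGroup.IsSolid.mem_of_nonneg_of_le {s : Set E} (hs : IsSolid s)
    {x y : E} (hy : y ∈ s) (hx : 0 ≤ x) (hxy : x ≤ y) : x ∈ s :=
  hs hy (by rwa [abs_of_nonneg hx, abs_of_nonneg (hx.trans hxy)])

theorem LatticeOrderedAddCommGroup.IsSolid.abs_mem_iff {s : Set E} (hs : IsSolid s) {x : E} :
    |x| ∈ s ↔ x ∈ s :=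
  ⟨fun h => hs h (abs_abs x).ge, fun h => hs h (abs_abs x).le⟩

theorem abs_sub_posPart_sub_le {x v : E} (hx : 0 ≤ x) (hv : 0 ≤ v) : |x - (x - v)⁺| ≤ v := by
  have hle : (x - v)⁺ ≤ x := sup_le (sub_le_self x hv) hx
  rw [abs_of_nonneg (sub_nonneg.mpr hle)]
  exact sub_le_comm.mp (le_posPart _)

variable {R : Type*} [Ring R] [Module R E]

def Submodule.QuotientLE (A : Submodule R E) (a b : E ⧸ A) : Prop :=
  ∃ x₁ y₁ : E, Submodule.Quotient.mk x₁ = a ∧ Submodule.Quotient.mk y₁ = b ∧ x₁ ≤ y₁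

namespace Submodule

variable {A : Submodule R E}

theorem quotientLE_mk_mk_iff (hA : IsSolid (A : Set E)) {x y : E} :
    A.QuotientLE (Quotient.mk x) (Quotient.mk y) ↔ (x - y)⁺ ∈ A := by
  constructor
  · rintro ⟨x₁, y₁, hx₁, hy₁, hle⟩
    have hc : (x - x₁) + (y₁ - y) ∈ A :=
      A.add_mem ((Quotient.eq A).mp hx₁.symm) ((Quotient.eq A).mp hy₁)
    have hxy : x - y ≤ (x - x₁) + (y₁ - y) := by
      have : x - y = (x - x₁) + (y₁ - y) + (x₁ - y₁) := by abel
      rw [this]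
      exact add_le_of_nonpos_right (sub_nonpos.mpr hle)
    exact hA.mem_of_nonneg_of_le (hA.abs_mem_iff.mpr hc) (posPart_nonneg _)
      (sup_le (hxy.trans (le_abs_self _)) (abs_nonneg _))
  · intro h
    refine ⟨x - (x - y)⁺, y, (Quotient.eq A).mpr ?_, rfl, sub_le_comm.mp (le_posPart _)⟩
    simpa using A.neg_mem h

theorem exists_nonneg_mk_eq_of_quotientLE_zero {a : E ⧸ A} (ha : A.QuotientLE 0 a) :
    ∃ x : E, 0 ≤ x ∧ Quotient.mk x = a := by
  obtain ⟨p, q, hp, rfl, hpq⟩ := ha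
  refine ⟨q - p, sub_nonneg.mpr hpq, ?_⟩
  rw [Quotient.mk_sub, hp, sub_zero]

theorem quotientLE_archimedean_iff (hA : IsSolid (A : Set E)) :
    (∀ a b : E ⧸ A, A.QuotientLE 0 a → A.QuotientLE 0 b → (∀ n : ℕ, A.QuotientLE (n • a) b) →
      a = 0) ↔
    ∀ x w : E, 0 ≤ x → 0 ≤ w → (∀ n : ℕ, (n • x - w)⁺ ∈ A) → x ∈ A := by
  constructor
  · intro h x w hx hw hxw
    rw [← Quotient.mk_eq_zero]
    refine h _ _ ⟨0, x, Quotient.mk_zero A, rfl, hx⟩ ⟨0, w, Quotient.mk_zero A, rfl, hw⟩ fun n => ?_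
    rw [← Quotient.mk_smul, quotientLE_mk_mk_iff hA]
    exact hxw n
  · intro h a b ha hb hab
    obtain ⟨x, hx, rfl⟩ := exists_nonneg_mk_eq_of_quotientLE_zero ha
    obtain ⟨w, hw, rfl⟩ := exists_nonneg_mk_eq_of_quotientLE_zero hb
    rw [Quotient.mk_eq_zero]
    refine h x w hx hw fun n => ?_
    rw [← quotientLE_mk_mk_iff hA, Quotient.mk_smul]
    exact hab n

end Submodule

end LatticeOrderedAddCommGroup

section RieszSpace

variable {E : Type*} [AddCommGroup E] [Lattice E] [IsOrderedAddMonoid E] [Module ℝ E]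

def TendstoRelUniformly (u : ℕ → E) (x : E) : Prop :=
  ∃ w : E, 0 ≤ w ∧ ∀ ε : ℝ, 0 < ε → ∃ N : ℕ, ∀ n ≥ N, |x - u n| ≤ ε • w

theorem tendstoRelUniformly_of_abs_sub_le [PosSMulMono ℝ E] {u : ℕ → E} {x w : E} (hw : 0 ≤ w)
    (h : ∀ n : ℕ, |x - u n| ≤ ((n : ℝ) + 1)⁻¹ • w) : TendstoRelUniformly u x := by
  refine ⟨w, hw, fun ε hε => ?_⟩
  obtain ⟨N, hN⟩ := exists_nat_one_div_lt hε
  refine ⟨N, fun n hn => (h n).trans (smul_le_smul_of_nonneg_right ?_ hw)⟩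
  rw [← one_div]
  exact (Nat.one_div_le_one_div hn).trans hN.le

theorem posPart_nsmul_abs_sub_le {x y w : E} {n : ℕ} (h : |x - y| ≤ ((n : ℝ) + 1)⁻¹ • w) :
    (n • |x| - w)⁺ ≤ (n + 1) • |y| := by
  have hx : |x| ≤ |y| + ((n : ℝ) + 1)⁻¹ • w :=
    sub_le_iff_le_add'.mp ((le_abs_self _).trans ((abs_abs_sub_abs_le x y).trans h))
  have hw : (n + 1) • (((n : ℝ) + 1)⁻¹ • w) = w := by
    rw [← Nat.cast_smul_eq_nsmul ℝ, smul_smul, Nat.cast_succ, mul_inv_cancel₀ (by positivity),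
      one_smul]
  have hnx : (n + 1) • |x| ≤ (n + 1) • |y| + w := by
    simpa only [nsmul_add, hw] using nsmul_le_nsmul_right hx (n + 1)
  refine sup_le ?_ (nsmul_nonneg (abs_nonneg y) _)
  calc n • |x| - w ≤ (n + 1) • |x| - w :=
        sub_le_sub_right (nsmul_le_nsmul_left (abs_nonneg x) n.le_succ) w
    _ ≤ (n + 1) • |y| := sub_le_iff_le_add.mpr hnx

theorem monotone_posPart_sub_inv_succ_smul [PosSMulMono ℝ E] (x : E) {w : E} (hw : 0 ≤ w) :
    Monotone fun n : ℕ => (x - ((n : ℝ) + 1)⁻¹ • w)⁺ := fun m n hmn =>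
  posPart_mono (sub_le_sub_left (smul_le_smul_of_nonneg_right
    (inv_anti₀ (by positivity) (by gcongr)) hw) x)

variable {A : Submodule ℝ E}

theorem Submodule.mem_of_tendstoRelUniformly (hA : IsSolid (A : Set E))
    (hA₄ : ∀ x w : E, 0 ≤ x → 0 ≤ w → (∀ n : ℕ, (n • x - w)⁺ ∈ A) → x ∈ A)
    {u : ℕ → E} {x : E} (hu : ∀ n, u n ∈ A) (hux : TendstoRelUniformly u x) : x ∈ A := by
  obtain ⟨w, hw, hconv⟩ := hux
  refine hA.abs_mem_iff.mp (hA₄ _ w (abs_nonneg x) hw fun n => ?_)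
  obtain ⟨N, hN⟩ := hconv (((n : ℝ) + 1)⁻¹) (by positivity)
  exact hA.mem_of_nonneg_of_le (nsmul_mem (hA.abs_mem_iff.mpr (hu N)) (n + 1))
    (posPart_nonneg _) (posPart_nsmul_abs_sub_le (hN N le_rfl))

theorem Submodule.mem_of_forall_posPart_nsmul_sub_mem [PosSMulMono ℝ E]
    (hA₃ : ∀ (u : ℕ → E) (x : E), (∀ n, u n ∈ A) → (∀ n, 0 ≤ u n) → Monotone u →
      TendstoRelUniformly u x → x ∈ A)
    {x w : E} (hx : 0 ≤ x) (hw : 0 ≤ w) (h : ∀ n : ℕ, (n • x - w)⁺ ∈ A) : x ∈ A := by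
  refine hA₃ (fun n => (x - ((n : ℝ) + 1)⁻¹ • w)⁺) x (fun n => ?_) (fun n => posPart_nonneg _)
    (monotone_posPart_sub_inv_succ_smul x hw) (tendstoRelUniformly_of_abs_sub_le hw fun n =>
      abs_sub_posPart_sub_le hx (smul_nonneg (by positivity) hw))
  rw [posPart_sub_inv_succ_smul]
  exact A.smul_mem _ (h (n + 1))

end RieszSpace

/-- For an ideal `A` of a Riesz space `E` and the quotient Riesz
space `E ⧸ A` (with order `r`), TFAE:
(1) `E ⧸ A` is Archimedean;
(2) `A` is uniformly closed;
(3) every increasing sequence of nonnegative elements of `A` converging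
relatively uniformly to some `x ∈ E` has `x ∈ A`;
(4) if `x, w ≥ 0` and `(n • x - w)⁺ ∈ A` for all `n : ℕ`, then `x ∈ A`. -/
theorem stmt_13 {E : Type*}
    [AddCommGroup E] [Lattice E] [Module ℝ E]
    [CovariantClass E E (· + ·) (· ≤ ·)] [PosSMulMono ℝ E]
    (A : Submodule ℝ E) (hA : ∀ x y : E, |x| ≤ |y| → y ∈ A → x ∈ A) :
    letI mk : E → E ⧸ A := Submodule.Quotient.mk
    letI r : (E ⧸ A) → (E ⧸ A) → Prop := fun a b =>
      ∃ x₁ y₁ : E, mk x₁ = a ∧ mk y₁ = b ∧ x₁ ≤ y₁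
    List.TFAE [
      -- (1) `E ⧸ A` is Archimedean
      ∀ a b : E ⧸ A, r 0 a → r 0 b → (∀ n : ℕ, r (n • a) b) → a = 0,
      -- (2) `A` is uniformly closed
      ∀ (u : ℕ → E) (x : E), (∀ n, u n ∈ A) →
        (∃ w : E, 0 ≤ w ∧ ∀ ε : ℝ, 0 < ε → ∃ N : ℕ, ∀ n ≥ N, |x - u n| ≤ ε • w) →
        x ∈ A,
      -- (3) increasing nonnegative sequences of `A` converging relatively
      -- uniformly have their limit in `A`
      ∀ (u : ℕ → E) (x : E), (∀ n, u n ∈ A) → (∀ n, 0 ≤ u n) → Monotone u →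
        (∃ w : E, 0 ≤ w ∧ ∀ ε : ℝ, 0 < ε → ∃ N : ℕ, ∀ n ≥ N, |x - u n| ≤ ε • w) →
        x ∈ A,
      -- (4)
      ∀ x w : E, 0 ≤ x → 0 ≤ w → (∀ n : ℕ, (n • x - w) ⊔ 0 ∈ A) → x ∈ A] := by
  have : IsOrderedAddMonoid E := { add_le_add_left := fun _ _ h c => add_le_add_left h c }
  have hA' : IsSolid (A : Set E) := fun y hy x hxy => hA x y hxy hy
  tfae_have 1 ↔ 4 := Submodule.quotientLE_archimedean_iff hA'
  tfae_have 4 → 2 := fun h₄ u x hu hux => A.mem_of_tendstoRelUniformly hA' h₄ hu hux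
  tfae_have 2 → 3 := fun h₂ u x hu _ _ => h₂ u x hu
  tfae_have 3 → 4 := fun h₃ x w hx hw h => A.mem_of_forall_posPart_nsmul_sub_mem h₃ hx hw h
  tfae_finish
end

section
/- For a Riesz space E, the following are equivalent: (1) for all x, y ∈ E with x ≥ 0 and y ≥ 0, there exists a natural number m (depending on x and y) such that x ⊓ (n • y) = x ⊓ (m • y) for all n ≥ m; (2) every principal ideal of E is a projection band. -/
/-!
Condition (1) says that the increasing sequence `x ⊓ n • z` is eventually constant, say from
`m` on; then `x ⊓ m • z` lies in `I_z` and `x - x ⊓ m • z` is disjoint from `z`, which splits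
`x ≥ 0`, and hence every `x = x⁺ - x⁻`, along `I_z ⊕ I_zᵈ`.

Conversely, if `x = x₁ + x₂` with `x₁ ∈ I_y` and `x₂ ∈ I_yᵈ`, then every `d ∈ I_y` with
`d ≤ x` satisfies `d ≤ x₁`, because `(d - x₁)⁺` lies in `I_y` and below `|x₂|`. Applied to
`d = x ⊓ n • y` this bounds the sequence by `x ⊓ m • y` once `x₁ ≤ m • y`; applied to the
elements of a subset of `I_z` it shows that their supremum lies below `s₁ ∈ I_z`, where
`s = s₁ + s₂`, so `I_z` is a band.
-/

section LatticeOrderedGroup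

variable {E : Type*} [AddCommGroup E] [Lattice E] [AddLeftMono E]

lemma inf_add_le_inf_add_inf {a b c : E} (ha : 0 ≤ a) (hb : 0 ≤ b) (hc : 0 ≤ c) :
    a ⊓ (b + c) ≤ a ⊓ b + a ⊓ c := by
  rw [inf_add]
  refine le_inf (inf_le_left.trans (le_add_of_nonneg_right (le_inf ha hc))) ?_
  rw [add_inf]
  exact le_inf (inf_le_left.trans (le_add_of_nonneg_left hb)) inf_le_right

lemma inf_nsmul_eq_zero {a b : E} (ha : 0 ≤ a) (hb : 0 ≤ b) (h : a ⊓ b = 0) (n : ℕ) :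
    a ⊓ n • b = 0 := by
  induction n with
  | zero => simpa using ha
  | succ k ih =>
    refine le_antisymm ?_ (le_inf ha (nsmul_nonneg hb _))
    calc a ⊓ (k + 1) • b = a ⊓ (k • b + b) := by rw [succ_nsmul]
      _ ≤ a ⊓ k • b + a ⊓ b := inf_add_le_inf_add_inf ha (nsmul_nonneg hb k) hb
      _ = 0 := by rw [ih, h, add_zero]

lemma abs_sub_inf_eq_zero {u v w : E} (hw : 0 ≤ w) (hu : |u| ⊓ w = 0) (hv : |v| ⊓ w = 0) :
    |u - v| ⊓ w = 0 := by
  refine le_antisymm ?_ (le_inf (abs_nonneg _) hw)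
  calc |u - v| ⊓ w ≤ (|u| + |v|) ⊓ w := by
        gcongr
        simpa only [sub_eq_add_neg, abs_neg] using abs_add_le u (-v)
    _ ≤ |u| ⊓ w + |v| ⊓ w := by
        simpa only [inf_comm w] using inf_add_le_inf_add_inf hw (abs_nonneg u) (abs_nonneg v)
    _ = 0 := by rw [hu, hv, add_zero]

/-- Since `z + x ⊓ m • z = (z + x) ⊓ (m + 1) • z`, the hypothesis gives
`(x - p) ⊓ z + p = x ⊓ (z + p) = p` for `p = x ⊓ m • z`. -/
lemma sub_inf_nsmul_inf_eq_zero {x z : E} (hz : 0 ≤ z) {m : ℕ}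
    (h : x ⊓ (m + 1) • z = x ⊓ m • z) : (x - x ⊓ m • z) ⊓ z = 0 := by
  set p := x ⊓ m • z
  have hzp : z + p = (z + x) ⊓ (m + 1) • z := by
    rw [add_comm z p, inf_add, succ_nsmul, add_comm z x]
  have hxzp : x ⊓ (z + p) = p := by
    rw [hzp, ← inf_assoc, inf_eq_left.2 (le_add_of_nonneg_left hz), h]
  refine add_right_cancel (b := p) ?_
  rw [inf_add, sub_add_cancel, hxzp, zero_add]

end LatticeOrderedGroup

section RieszSpace

variable {E : Type*} [AddCommGroup E] [Lattice E] [Module ℝ E]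

def principalIdeal (z : E) : Set E := {x | ∃ l : ℝ, 0 < l ∧ |x| ≤ l • z}

def disjointComplement (A : Set E) : Set E := {x | ∀ b ∈ A, |x| ⊓ |b| = 0}

variable {x y z : E}

lemma mem_principalIdeal_of_abs_le (hy : y ∈ principalIdeal z) (h : |x| ≤ |y|) :
    x ∈ principalIdeal z :=
  let ⟨l, hl, hyl⟩ := hy
  ⟨l, hl, h.trans hyl⟩

variable [AddLeftMono E]

lemma sub_mem_principalIdeal (hx : x ∈ principalIdeal z) (hy : y ∈ principalIdeal z) :
    x - y ∈ principalIdeal z := by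
  obtain ⟨l, hl, hxl⟩ := hx
  obtain ⟨l', hl', hyl'⟩ := hy
  refine ⟨l + l', by positivity, ?_⟩
  calc |x - y| ≤ |x| + |y| := by
        simpa only [sub_eq_add_neg, abs_neg] using abs_add_le x (-y)
    _ ≤ l • z + l' • z := add_le_add hxl hyl'
    _ = (l + l') • z := (add_smul l l' z).symm

lemma posPart_mem_principalIdeal (hx : x ∈ principalIdeal z) : x⁺ ∈ principalIdeal z :=
  mem_principalIdeal_of_abs_le hx <| by
    rw [abs_of_nonneg (posPart_nonneg x)]
    exact sup_le (le_abs_self x) (abs_nonneg x)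

lemma mem_principalIdeal_of_le_of_le {a b : E} (ha : a ∈ principalIdeal z)
    (hb : b ∈ principalIdeal z) (hax : a ≤ x) (hxb : x ≤ b) : x ∈ principalIdeal z := by
  obtain ⟨l, hl, hal⟩ := ha
  obtain ⟨l', hl', hbl'⟩ := hb
  refine ⟨l + l', by positivity, abs_le'.2 ⟨?_, ?_⟩⟩
  · calc x ≤ |b| := hxb.trans (le_abs_self b)
      _ ≤ l' • z := hbl'
      _ ≤ l • z + l' • z := le_add_of_nonneg_left ((abs_nonneg a).trans hal)
      _ = (l + l') • z := (add_smul l l' z).symm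
  · calc -x ≤ |a| := (neg_le_neg_iff.2 hax).trans (neg_le_abs a)
      _ ≤ l • z := hal
      _ ≤ l • z + l' • z := le_add_of_nonneg_right ((abs_nonneg b).trans hbl')
      _ = (l + l') • z := (add_smul l l' z).symm

lemma le_of_le_add_of_mem_disjointComplement {d x₁ x₂ : E} (hd : d ∈ principalIdeal z)
    (hx₁ : x₁ ∈ principalIdeal z) (hx₂ : x₂ ∈ disjointComplement (principalIdeal z))
    (h : d ≤ x₁ + x₂) : d ≤ x₁ := by
  set b := (d - x₁)⁺
  have hb_le : b ≤ |x₂| :=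
    sup_le ((sub_le_iff_le_add'.2 h).trans (le_abs_self x₂)) (abs_nonneg x₂)
  have hb_disj : |x₂| ⊓ |b| = 0 :=
    hx₂ b (posPart_mem_principalIdeal (sub_mem_principalIdeal hd hx₁))
  rw [abs_of_nonneg (posPart_nonneg _), inf_eq_right.2 hb_le, posPart_eq_zero] at hb_disj
  exact sub_nonpos.1 hb_disj

variable [PosSMulMono ℝ E]

lemma smul_le_smul_of_nonneg_right' {l l' : ℝ} (h : l ≤ l') {z : E} (hz : 0 ≤ z) :
    l • z ≤ l' • z := by
  rw [← sub_nonneg, ← sub_smul]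
  exact smul_nonneg (sub_nonneg.2 h) hz

lemma inf_smul_eq_zero {a z : E} (ha : 0 ≤ a) (hz : 0 ≤ z) (h : a ⊓ z = 0) {l : ℝ}
    (hl : 0 ≤ l) : a ⊓ l • z = 0 := by
  refine le_antisymm ?_ (le_inf ha (smul_nonneg hl hz))
  calc a ⊓ l • z ≤ a ⊓ ((⌈l⌉₊ : ℝ) • z) := by
        gcongr
        exact smul_le_smul_of_nonneg_right' (Nat.le_ceil l) hz
    _ = 0 := by rw [Nat.cast_smul_eq_nsmul, inf_nsmul_eq_zero ha hz h]

lemma mem_principalIdeal_of_abs_le_smul (hz : 0 ≤ z) {l : ℝ} (h : |x| ≤ l • z) :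
    x ∈ principalIdeal z :=
  ⟨max l 1, by positivity, h.trans (smul_le_smul_of_nonneg_right' (le_max_left l 1) hz)⟩

lemma self_mem_principalIdeal (hz : 0 ≤ z) : z ∈ principalIdeal z :=
  mem_principalIdeal_of_abs_le_smul hz (l := 1) (by rw [abs_of_nonneg hz, one_smul])

lemma mem_disjointComplement_principalIdeal_iff (hz : 0 ≤ z) :
    x ∈ disjointComplement (principalIdeal z) ↔ |x| ⊓ z = 0 := by
  refine ⟨fun hx ↦ ?_, fun hx b ⟨l, hl, hbl⟩ ↦ ?_⟩
  · simpa only [abs_of_nonneg hz] using hx z (self_mem_principalIdeal hz)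
  · refine le_antisymm ?_ (le_inf (abs_nonneg x) (abs_nonneg b))
    calc |x| ⊓ |b| ≤ |x| ⊓ l • z := inf_le_inf_left _ hbl
      _ = 0 := inf_smul_eq_zero (abs_nonneg x) hz hx hl.le

lemma sub_mem_disjointComplement_principalIdeal (hz : 0 ≤ z)
    (hx : x ∈ disjointComplement (principalIdeal z))
    (hy : y ∈ disjointComplement (principalIdeal z)) :
    x - y ∈ disjointComplement (principalIdeal z) := by
  rw [mem_disjointComplement_principalIdeal_iff hz] at hx hy ⊢
  exact abs_sub_inf_eq_zero hz hx hy

lemma inf_nsmul_mem_principalIdeal (hz : 0 ≤ z) (hx : 0 ≤ x) (m : ℕ) :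
    x ⊓ m • z ∈ principalIdeal z := by
  refine mem_principalIdeal_of_abs_le_smul hz (l := m) ?_
  rw [abs_of_nonneg (le_inf hx (nsmul_nonneg hz m)), Nat.cast_smul_eq_nsmul]
  exact inf_le_right

lemma exists_add_mem_disjointComplement_of_nonneg (hz : 0 ≤ z) (hx : 0 ≤ x) {m : ℕ}
    (hm : x ⊓ (m + 1) • z = x ⊓ m • z) :
    ∃ x₁ ∈ principalIdeal z, ∃ x₂ ∈ disjointComplement (principalIdeal z), x = x₁ + x₂ := by
  refine ⟨x ⊓ m • z, ?_, x - x ⊓ m • z, ?_, (add_sub_cancel _ _).symm⟩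
  · exact inf_nsmul_mem_principalIdeal hz hx m
  · rw [mem_disjointComplement_principalIdeal_iff hz, abs_of_nonneg (sub_nonneg.2 inf_le_left)]
    exact sub_inf_nsmul_inf_eq_zero hz hm

lemma exists_add_mem_disjointComplement (hz : 0 ≤ z)
    (h : ∀ x : E, 0 ≤ x → ∃ m : ℕ, x ⊓ (m + 1) • z = x ⊓ m • z) (x : E) :
    ∃ x₁ ∈ principalIdeal z, ∃ x₂ ∈ disjointComplement (principalIdeal z), x = x₁ + x₂ := by
  obtain ⟨m, hm⟩ := h _ (posPart_nonneg x)
  obtain ⟨m', hm'⟩ := h _ (negPart_nonneg x)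
  obtain ⟨p₁, hp₁, p₂, hp₂, hp⟩ :=
    exists_add_mem_disjointComplement_of_nonneg hz (posPart_nonneg x) hm
  obtain ⟨q₁, hq₁, q₂, hq₂, hq⟩ :=
    exists_add_mem_disjointComplement_of_nonneg hz (negPart_nonneg x) hm'
  refine ⟨p₁ - q₁, sub_mem_principalIdeal hp₁ hq₁, p₂ - q₂,
    sub_mem_disjointComplement_principalIdeal hz hp₂ hq₂, ?_⟩
  rw [← posPart_sub_negPart x, hp, hq]
  abel

lemma lub_mem_principalIdeal (hz : 0 ≤ z)
    (hdec : ∀ x : E,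
      ∃ x₁ ∈ principalIdeal z, ∃ x₂ ∈ disjointComplement (principalIdeal z), x = x₁ + x₂)
    {D : Set E} {s : E} (hD : D ⊆ principalIdeal z) (hs : IsLUB D s) : s ∈ principalIdeal z := by
  rcases D.eq_empty_or_nonempty with rfl | ⟨d, hd⟩
  · have hs_bot := isLUB_empty_iff.1 hs
    have hs_zero : s = 0 := le_antisymm (hs_bot 0) (by simpa using hs_bot (s + s))
    exact mem_principalIdeal_of_abs_le_smul hz (l := 0) (by simp [hs_zero])
  · obtain ⟨s₁, hs₁, s₂, hs₂, rfl⟩ := hdec s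
    have hs_le : s₁ + s₂ ≤ s₁ := hs.2 fun d' hd' ↦
      le_of_le_add_of_mem_disjointComplement (hD hd') hs₁ hs₂ (hs.1 hd')
    exact mem_principalIdeal_of_le_of_le (hD hd) hs₁ (hs.1 hd) hs_le

lemma exists_inf_nsmul_eq_of_add_mem_disjointComplement {x₁ x₂ : E} (hx : 0 ≤ x) (hy : 0 ≤ y)
    (hx₁ : x₁ ∈ principalIdeal y) (hx₂ : x₂ ∈ disjointComplement (principalIdeal y))
    (hsum : x = x₁ + x₂) : ∃ m : ℕ, ∀ n ≥ m, x ⊓ n • y = x ⊓ m • y := by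
  obtain ⟨l, hl, hx₁l⟩ := hx₁
  refine ⟨⌈l⌉₊, fun n hn ↦ le_antisymm (le_inf inf_le_left ?_) (by gcongr)⟩
  calc x ⊓ n • y ≤ x₁ :=
        le_of_le_add_of_mem_disjointComplement (inf_nsmul_mem_principalIdeal hy hx n) ⟨l, hl, hx₁l⟩ hx₂ (hsum ▸ inf_le_left)
    _ ≤ l • y := (le_abs_self x₁).trans hx₁l
    _ ≤ (⌈l⌉₊ : ℝ) • y := smul_le_smul_of_nonneg_right' (Nat.le_ceil l) hy
    _ = ⌈l⌉₊ • y := Nat.cast_smul_eq_nsmul ℝ _ y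

end RieszSpace

/-- For a Riesz space `E`, TFAE:
(1) for all `x, y ≥ 0` there is `m : ℕ` with `x ⊓ (n • y) = x ⊓ (m • y)` for
all `n ≥ m`;
(2) every principal ideal of `E` is a projection band. -/
theorem stmt_14 {E : Type*}
    [AddCommGroup E] [Lattice E] [Module ℝ E]
    [CovariantClass E E (· + ·) (· ≤ ·)] [PosSMulMono ℝ E] :
    (∀ x y : E, 0 ≤ x → 0 ≤ y → ∃ m : ℕ, ∀ n ≥ m, x ⊓ (n • y) = x ⊓ (m • y)) ↔
    (∀ z : E, 0 ≤ z →
      letI Iz : Set E := {x : E | ∃ l : ℝ, 0 < l ∧ |x| ≤ l • z}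
      -- `Iz` is a band: suprema of its subsets belong to it
      (∀ (D : Set E) (s : E), D ⊆ Iz → IsLUB D s → s ∈ Iz) ∧
      -- `E = Iz ⊕ Izᵈ`
      (∀ x : E, ∃ x₁ ∈ Iz, ∃ x₂ : E, (∀ b ∈ Iz, |x₂| ⊓ |b| = 0) ∧ x = x₁ + x₂)) := by
  constructor
  · intro h z hz
    have hdec := exists_add_mem_disjointComplement hz fun x hx ↦
      (h x z hx hz).imp fun m hm ↦ hm (m + 1) m.le_succ
    exact ⟨fun D s hD hs ↦ lub_mem_principalIdeal hz hdec hD hs, hdec⟩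
  · intro h x y hx hy
    obtain ⟨x₁, hx₁, x₂, hx₂, hsum⟩ := (h y hy).2 x
    exact exists_inf_nsmul_eq_of_add_mem_disjointComplement hx hy hx₁ hx₂ hsum
end

section
/- Let E and F be Riesz spaces with F Dedekind complete, let M be a majorizing Riesz subspace of E, and let T : M → F be a Riesz homomorphism. Then T extends to a Riesz homomorphism on all of E; that is, there exists a Riesz homomorphism S : E → F with S(m) = T(m) for every m ∈ M. -/
/-!
Let `p x` be the infimum of `T m` over the `m ∈ M` with `x ≤ m`; it exists because `F` is
Dedekind complete and `M` majorizes `E`. It is a monotone sublinear map with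
`p (x ⊔ y) ≤ p x ⊔ p y` and `p ≤ T` on `M`. Pointwise infima of chains of such maps are again
such maps, so by Zorn's lemma there is a minimal one, `q`. For each `v`, the map
`z ↦ inf_{t ≥ 0} (q (z + t • v) - t • q v)` is again of this kind and lies below `q`, hence equals
`q`; at `t = 1` this reads `q x + q v ≤ q (x + v)`. So `q` is additive, hence linear, and a monotone
linear map with `q (x ⊔ y) ≤ q x ⊔ q y` is a Riesz homomorphism; sublinearity forces `q = T` on `M`.
-/

open Set

section LatticeOrderedGroup

variable {F : Type*} [AddCommGroup F] [Lattice F] [AddLeftMono F] {A B : Set F} {α β a c : F}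

theorem IsGLB.le_add_of_forall_le_add (hA : IsGLB A α) (hB : IsGLB B β)
    (h : ∀ a ∈ A, ∀ b ∈ B, c ≤ a + b) : c ≤ α + β :=
  (hA.add hB).2 <| forall_mem_image2.2 h

theorem IsGLB.le_sup_of_forall_le_sup_left (hB : IsGLB B β) (h : ∀ b ∈ B, c ≤ a ⊔ b) :
    c ≤ a ⊔ β := by
  -- `a ⊔ b = a + b - a ⊓ b`, and `a ⊓ b` decreases with `b`
  have hlow : c - a + a ⊓ β ≤ β := hB.2 fun b hb => by
    have hab : c ≤ a + b - a ⊓ b := by rw [← inf_add_sup a b, add_sub_cancel_left]; exact h b hb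
    calc c - a + a ⊓ β ≤ c - a + a ⊓ b := by gcongr; exact hB.1 hb
      _ ≤ (a + b - a ⊓ b) - a + a ⊓ b := by gcongr
      _ = b := by abel
  calc c = (c - a + a ⊓ β) + (a - a ⊓ β) := by abel
    _ ≤ β + (a - a ⊓ β) := by gcongr
    _ = a ⊔ β := by rw [← add_sub_cancel_left (a ⊓ β) (a ⊔ β), inf_add_sup]; abel

theorem IsGLB.le_sup_of_forall_le_sup (hA : IsGLB A α) (hB : IsGLB B β)
    (h : ∀ a ∈ A, ∀ b ∈ B, c ≤ a ⊔ b) : c ≤ α ⊔ β := by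
  rw [sup_comm]
  refine hA.le_sup_of_forall_le_sup_left fun a ha => ?_
  rw [sup_comm]
  exact hB.le_sup_of_forall_le_sup_left (h a ha)

theorem exists_isGLB_of_exists_isLUB
    (hF : ∀ D : Set F, D.Nonempty → BddAbove D → ∃ s : F, IsLUB D s)
    {D : Set F} (hne : D.Nonempty) (hbdd : BddBelow D) : ∃ s, IsGLB D s :=
  let ⟨s, hs⟩ := hF (-D) hne.neg hbdd.neg
  ⟨-s, by simpa using hs.neg⟩

end LatticeOrderedGroup

section RieszExtension

variable {E F : Type*} [AddCommGroup E] [Lattice E] [Module ℝ E] [Lattice F] {M : Submodule ℝ E}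

theorem map_le_map_of_map_sup {f : M → F}
    (hf : ∀ (a b : M) (h : (a : E) ⊔ (b : E) ∈ M), f ⟨(a : E) ⊔ (b : E), h⟩ = f a ⊔ f b)
    {a b : M} (hab : (a : E) ≤ b) : f a ≤ f b := by
  have hmem : (a : E) ⊔ b ∈ M := (sup_eq_right.2 hab).symm ▸ b.2
  have h := hf a b hmem
  rw [show (⟨(a : E) ⊔ b, hmem⟩ : M) = b from Subtype.ext (sup_eq_right.2 hab)] at h
  exact h ▸ le_sup_left

variable [AddCommGroup F] [Module ℝ F]

structure IsRieszSublinear (T : M →ₗ[ℝ] F) (q : E → F) : Prop where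
  monotone : Monotone q
  map_add_le (x y : E) : q (x + y) ≤ q x + q y
  map_smul_le {c : ℝ} (hc : 0 < c) (x : E) : q (c • x) ≤ c • q x
  map_sup_le (x y : E) : q (x ⊔ y) ≤ q x ⊔ q y
  map_coe_le (m : M) : q m ≤ T m

namespace IsRieszSublinear

variable {T : M →ₗ[ℝ] F} {q : E → F}

theorem map_le_of_le (hq : IsRieszSublinear T q) {x : E} {m : M} (h : x ≤ m) : q x ≤ T m :=
  (hq.monotone h).trans (hq.map_coe_le m)

theorem map_smul_of_pos [PosSMulMono ℝ F] (hq : IsRieszSublinear T q) {c : ℝ} (hc : 0 < c)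
    (x : E) : q (c • x) = c • q x := by
  refine le_antisymm (hq.map_smul_le hc x) ?_
  have h := hq.map_smul_le (inv_pos.2 hc) (c • x)
  rwa [inv_smul_smul₀ hc.ne', le_inv_smul_iff_of_pos hc] at h

variable [AddLeftMono F]

protected theorem map_zero (hq : IsRieszSublinear T q) : q 0 = 0 := by
  refine le_antisymm (by simpa using hq.map_coe_le 0) ?_
  have h := hq.map_add_le 0 0
  rw [add_zero] at h
  exact (le_add_iff_nonneg_left _).1 h

theorem neg_map_neg_le (hq : IsRieszSublinear T q) (x : E) : -q (-x) ≤ q x := by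
  have h := hq.map_add_le (-x) x
  rw [neg_add_cancel, hq.map_zero] at h
  exact neg_le_iff_add_nonneg'.2 h

theorem map_coe (hq : IsRieszSublinear T q) (m : M) : q m = T m := by
  refine le_antisymm (hq.map_coe_le m) ?_
  have h := hq.map_coe_le (-m)
  rw [Submodule.coe_neg, map_neg] at h
  exact (le_neg_of_le_neg h).trans (hq.neg_map_neg_le m)

theorem neg_le_map (hq : IsRieszSublinear T q) {x : E} {m : M} (h : -x ≤ m) : -T m ≤ q x :=
  (neg_le_neg_iff.2 (hq.map_le_of_le h)).trans (hq.neg_map_neg_le x)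

variable [PosSMulMono ℝ F]

theorem map_smul_of_nonneg (hq : IsRieszSublinear T q) {c : ℝ} (hc : 0 ≤ c) (x : E) :
    q (c • x) = c • q x := by
  rcases hc.eq_or_lt with rfl | hc
  · simp [hq.map_zero]
  · exact hq.map_smul_of_pos hc x

theorem of_isGLB {D : E → Set F} {g : E → F} (hg : ∀ x, IsGLB (D x) (g x))
    (hmono : ∀ x y, x ≤ y → ∀ b ∈ D y, g x ≤ b)
    (hadd : ∀ x y, ∀ a ∈ D x, ∀ b ∈ D y, g (x + y) ≤ a + b)
    (hsmul : ∀ c : ℝ, 0 < c → ∀ x, ∀ a ∈ D x, g (c • x) ≤ c • a)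
    (hsup : ∀ x y, ∀ a ∈ D x, ∀ b ∈ D y, g (x ⊔ y) ≤ a ⊔ b)
    (hT : ∀ m : M, g m ≤ T m) : IsRieszSublinear T g where
  monotone x y hxy := (hg y).2 (hmono x y hxy)
  map_add_le x y := (hg x).le_add_of_forall_le_add (hg y) (hadd x y)
  map_smul_le {c} hc x := by
    have h : c⁻¹ • g (c • x) ≤ g x := (hg x).2 fun a ha =>
      (inv_smul_le_iff_of_pos hc).2 (hsmul c hc x a ha)
    rwa [inv_smul_le_iff_of_pos hc] at h
  map_sup_le x y := (hg x).le_sup_of_forall_le_sup (hg y) (hsup x y)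
  map_coe_le := hT

theorem map_add_smul_sub_le (hq : IsRieszSublinear T q) (z v : E) {s t : ℝ} (hst : s ≤ t) :
    q (z + t • v) - t • q v ≤ q (z + s • v) - s • q v := by
  have h : q (z + t • v) ≤ q (z + s • v) + (t - s) • q v := by
    calc q (z + t • v) = q (z + s • v + (t - s) • v) := by
          rw [add_assoc, ← add_smul, add_sub_cancel]
      _ ≤ q (z + s • v) + q ((t - s) • v) := hq.map_add_le _ _
      _ = q (z + s • v) + (t - s) • q v := by rw [hq.map_smul_of_nonneg (sub_nonneg.2 hst)]
  calc q (z + t • v) - t • q v ≤ q (z + s • v) + (t - s) • q v - t • q v := by gcongr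
    _ = q (z + s • v) - s • q v := by rw [sub_smul]; abel

theorem neg_map_neg_le_map_add_smul_sub (hq : IsRieszSublinear T q) (z v : E) {t : ℝ}
    (ht : 0 ≤ t) : -q (-z) ≤ q (z + t • v) - t • q v := by
  have h := hq.map_add_le (z + t • v) (-z)
  rw [add_neg_cancel_comm, hq.map_smul_of_nonneg ht] at h
  exact neg_le_sub_iff_le_add.2 h

theorem exists_le_map_add_sub
    (hF : ∀ D : Set F, D.Nonempty → BddAbove D → ∃ s : F, IsLUB D s) [AddLeftMono E]
    (hq : IsRieszSublinear T q) (v : E) :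
    ∃ r, IsRieszSublinear T r ∧ r ≤ q ∧ ∀ x, r x ≤ q (x + v) - q v := by
  let f : ℝ → E → F := fun t z => q (z + t • v) - t • q v
  have hD : ∀ z, ∃ r, IsGLB ((f · z) '' Ici 0) r := fun z =>
    exists_isGLB_of_exists_isLUB hF ⟨_, mem_image_of_mem _ self_mem_Ici⟩
      ⟨-q (-z), by rintro _ ⟨t, ht, rfl⟩; exact hq.neg_map_neg_le_map_add_smul_sub z v ht⟩
  choose r hr using hD
  have hr_le : ∀ z, ∀ t, 0 ≤ t → r z ≤ f t z := fun z t ht => (hr z).1 ⟨t, ht, rfl⟩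
  have hf_zero : ∀ z, f 0 z = q z := by simp [f]
  refine ⟨r, of_isGLB hr ?_ ?_ ?_ ?_ ?_, fun z => (hr_le z 0 le_rfl).trans_eq (hf_zero z),
    fun z => by simpa [f] using hr_le z 1 zero_le_one⟩
  · rintro x y hxy _ ⟨t, ht, rfl⟩
    exact (hr_le x t ht).trans (sub_le_sub_right (hq.monotone (add_le_add_left hxy _)) _)
  · rintro x y _ ⟨t, ht, rfl⟩ _ ⟨s, hs, rfl⟩
    refine (hr_le _ (t + s) (add_nonneg ht hs)).trans ?_
    calc f (t + s) (x + y) ≤ q (x + t • v) + q (y + s • v) - (t + s) • q v := by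
          refine sub_le_sub_right ?_ _
          convert hq.map_add_le (x + t • v) (y + s • v) using 2
          module
      _ = f t x + f s y := by simp only [f, add_smul]; abel
  · rintro c hc x _ ⟨t, ht, rfl⟩
    refine (hr_le _ (c * t) (mul_nonneg hc.le ht)).trans ?_
    calc f (c * t) (c • x) = q (c • (x + t • v)) - c • t • q v := by
          simp only [f, smul_add, smul_smul]
      _ ≤ c • q (x + t • v) - c • t • q v := sub_le_sub_right (hq.map_smul_le hc _) _
      _ = c • f t x := (smul_sub _ _ _).symm
  · rintro x y _ ⟨t, ht, rfl⟩ _ ⟨s, hs, rfl⟩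
    refine (hr_le _ (max t s) (ht.trans (le_max_left t s))).trans ?_
    calc f (max t s) (x ⊔ y) ≤ f (max t s) x ⊔ f (max t s) y := by
          simp only [f, sup_add, ← sup_sub]
          exact sub_le_sub_right (hq.map_sup_le _ _) _
      _ ≤ f t x ⊔ f s y := sup_le_sup (hq.map_add_smul_sub_le x v (le_max_left t s))
          (hq.map_add_smul_sub_le y v (le_max_right t s))
  · exact fun m => (hr_le m 0 le_rfl).trans ((hf_zero m).trans_le (hq.map_coe_le m))

theorem map_add_of_minimal
    (hF : ∀ D : Set F, D.Nonempty → BddAbove D → ∃ s : F, IsLUB D s) [AddLeftMono E]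
    (hq : Minimal (IsRieszSublinear T) q) (x y : E) : q (x + y) = q x + q y := by
  refine (hq.1.map_add_le x y).antisymm ?_
  obtain ⟨r, hr, hrq, hr_le⟩ := hq.1.exists_le_map_add_sub hF y
  exact le_sub_iff_add_le.1 ((hq.le_of_le hr hrq x).trans (hr_le x))

def toLinearMap (hq : IsRieszSublinear T q) (hadd : ∀ x y, q (x + y) = q x + q y) :
    E →ₗ[ℝ] F where
  toFun := q
  map_add' := hadd
  map_smul' c x := by
    rcases le_total 0 c with hc | hc
    · exact hq.map_smul_of_nonneg hc x
    · have h := hadd (c • x) ((-c) • x)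
      rw [← add_smul, add_neg_cancel, zero_smul, hq.map_zero,
        hq.map_smul_of_nonneg (neg_nonneg.2 hc), neg_smul] at h
      exact add_neg_eq_zero.1 h.symm

theorem map_sup_toLinearMap (hq : IsRieszSublinear T q) (hadd : ∀ x y, q (x + y) = q x + q y)
    (x y : E) : hq.toLinearMap hadd (x ⊔ y) = hq.toLinearMap hadd x ⊔ hq.toLinearMap hadd y :=
  (hq.map_sup_le x y).antisymm (sup_le (hq.monotone le_sup_left) (hq.monotone le_sup_right))

theorem exists_le_of_isChain
    (hF : ∀ D : Set F, D.Nonempty → BddAbove D → ∃ s : F, IsLUB D s)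
    (hMmaj : ∀ x : E, ∃ y ∈ M, x ≤ y) {c : Set (E → F)} (hc : ∀ q ∈ c, IsRieszSublinear T q)
    (hchain : IsChain (· ≤ ·) c) (hne : c.Nonempty) :
    ∃ g, IsRieszSublinear T g ∧ ∀ q ∈ c, g ≤ q := by
  have hdir : ∀ q₁ ∈ c, ∀ q₂ ∈ c, ∃ q ∈ c, q ≤ q₁ ∧ q ≤ q₂ := fun q₁ h₁ q₂ h₂ =>
    (hchain.total h₁ h₂).elim (fun h => ⟨q₁, h₁, le_rfl, h⟩) fun h => ⟨q₂, h₂, h, le_rfl⟩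
  have hD : ∀ x, ∃ g, IsGLB ((· x) '' c) g := fun x => by
    obtain ⟨m, hm, hxm⟩ := hMmaj (-x)
    refine exists_isGLB_of_exists_isLUB hF (hne.image _) ⟨-T ⟨m, hm⟩, ?_⟩
    rintro _ ⟨q, hq, rfl⟩
    exact (hc q hq).neg_le_map (m := ⟨m, hm⟩) hxm
  choose g hg using hD
  have hg_le : ∀ q ∈ c, g ≤ q := fun q hq x => (hg x).1 ⟨q, hq, rfl⟩
  obtain ⟨q₀, hq₀⟩ := hne
  refine ⟨g, of_isGLB hg ?_ ?_ ?_ ?_ ?_, hg_le⟩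
  · rintro x y hxy _ ⟨q, hq, rfl⟩
    exact (hg_le q hq x).trans ((hc q hq).monotone hxy)
  · rintro x y _ ⟨q₁, h₁, rfl⟩ _ ⟨q₂, h₂, rfl⟩
    obtain ⟨q, hq, hq₁, hq₂⟩ := hdir q₁ h₁ q₂ h₂
    exact (hg_le q hq _).trans <| ((hc q hq).map_add_le x y).trans (add_le_add (hq₁ x) (hq₂ y))
  · rintro r hr x _ ⟨q, hq, rfl⟩
    exact (hg_le q hq _).trans ((hc q hq).map_smul_le hr x)
  · rintro x y _ ⟨q₁, h₁, rfl⟩ _ ⟨q₂, h₂, rfl⟩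
    obtain ⟨q, hq, hq₁, hq₂⟩ := hdir q₁ h₁ q₂ h₂
    exact (hg_le q hq _).trans <| ((hc q hq).map_sup_le x y).trans (sup_le_sup (hq₁ x) (hq₂ y))
  · exact fun m => (hg_le q₀ hq₀ m).trans ((hc q₀ hq₀).map_coe_le m)

theorem exists_minimal
    (hF : ∀ D : Set F, D.Nonempty → BddAbove D → ∃ s : F, IsLUB D s)
    (hMmaj : ∀ x : E, ∃ y ∈ M, x ≤ y) (hq : IsRieszSublinear T q) :
    ∃ q, Minimal (IsRieszSublinear T) q := by
  obtain ⟨q, -, hq⟩ := zorn_le_nonempty₀ (α := (E → F)ᵒᵈ)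
    {q | IsRieszSublinear T (OrderDual.ofDual q)} (fun c hc hchain q hq => by
      obtain ⟨g, hg, hgc⟩ := exists_le_of_isChain hF hMmaj (c := c) hc hchain.symm ⟨q, hq⟩
      exact ⟨OrderDual.toDual g, hg, hgc⟩)
    (OrderDual.toDual q) hq
  exact ⟨OrderDual.ofDual q, maximal_toDual.1 hq⟩

end IsRieszSublinear

theorem exists_isRieszSublinear [AddLeftMono E] [PosSMulMono ℝ E] [AddLeftMono F]
    [PosSMulMono ℝ F]
    (hF : ∀ D : Set F, D.Nonempty → BddAbove D → ∃ s : F, IsLUB D s)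
    (hMsup : ∀ x ∈ M, ∀ y ∈ M, x ⊔ y ∈ M) (hMmaj : ∀ x : E, ∃ y ∈ M, x ≤ y)
    {T : M →ₗ[ℝ] F}
    (hT : ∀ (a b : M) (h : (a : E) ⊔ (b : E) ∈ M), T ⟨(a : E) ⊔ (b : E), h⟩ = T a ⊔ T b) :
    ∃ q, IsRieszSublinear T q := by
  have hD : ∀ x : E, ∃ p, IsGLB (T '' {m : M | x ≤ m}) p := fun x => by
    obtain ⟨m, hm, hxm⟩ := hMmaj x
    obtain ⟨w, hw, hxw⟩ := hMmaj (-x)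
    refine exists_isGLB_of_exists_isLUB hF ⟨_, ⟨⟨m, hm⟩, hxm, rfl⟩⟩ ⟨T (-⟨w, hw⟩), ?_⟩
    rintro _ ⟨m', hm', rfl⟩
    exact map_le_map_of_map_sup hT ((neg_le.1 hxw).trans hm')
  choose p hp using hD
  have hp_le : ∀ {x : E} {m : M}, x ≤ m → p x ≤ T m := fun h => (hp _).1 ⟨_, h, rfl⟩
  refine ⟨p, .of_isGLB hp ?_ ?_ ?_ ?_ fun m => hp_le le_rfl⟩
  · rintro x y hxy _ ⟨m, hm, rfl⟩
    exact hp_le (hxy.trans hm)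
  · rintro x y _ ⟨m, hm, rfl⟩ _ ⟨m', hm', rfl⟩
    rw [← map_add]
    exact hp_le (add_le_add hm hm')
  · rintro c hc x _ ⟨m, hm, rfl⟩
    rw [← map_smul]
    exact hp_le (smul_le_smul_of_nonneg_left hm hc.le)
  · rintro x y _ ⟨m, hm, rfl⟩ _ ⟨m', hm', rfl⟩
    rw [← hT m m' (hMsup _ m.2 _ m'.2)]
    exact hp_le (sup_le_sup hm hm')

end RieszExtension

/-- If `F` is Dedekind complete, `M` is a majorizing Riesz
subspace of `E` and `T : M → F` is a Riesz homomorphism, then `T` extends to a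
Riesz homomorphism `S : E → F`. -/
theorem stmt_17 {E F : Type*}
    [AddCommGroup E] [Lattice E] [Module ℝ E]
    [CovariantClass E E (· + ·) (· ≤ ·)] [PosSMulMono ℝ E]
    [AddCommGroup F] [Lattice F] [Module ℝ F]
    [CovariantClass F F (· + ·) (· ≤ ·)] [PosSMulMono ℝ F]
    -- `F` is Dedekind complete
    (hF : ∀ D : Set F, D.Nonempty → BddAbove D → ∃ s : F, IsLUB D s)
    (M : Submodule ℝ E)
    -- `M` is a Riesz subspace of `E`
    (hMsub : ∀ x ∈ M, ∀ y ∈ M, x ⊔ y ∈ M ∧ x ⊓ y ∈ M)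
    -- `M` majorizes `E`
    (hMmaj : ∀ x : E, ∃ y ∈ M, x ≤ y)
    (T : M →ₗ[ℝ] F)
    -- `T` is a Riesz homomorphism on `M`
    (hT : ∀ (a b : M) (h : (a : E) ⊔ (b : E) ∈ M),
      T ⟨(a : E) ⊔ (b : E), h⟩ = T a ⊔ T b) :
    ∃ S : E →ₗ[ℝ] F, (∀ x y : E, S (x ⊔ y) = S x ⊔ S y) ∧ ∀ m : M, S m = T m := by
  obtain ⟨p, hp⟩ := exists_isRieszSublinear hF (fun x hx y hy => (hMsub x hx y hy).1) hMmaj hT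
  obtain ⟨q, hq⟩ := hp.exists_minimal hF hMmaj
  have hadd := IsRieszSublinear.map_add_of_minimal hF hq
  exact ⟨hq.1.toLinearMap hadd, hq.1.map_sup_toLinearMap hadd, hq.1.map_coe⟩
end

section
/- Let E, H and F be Riesz spaces with F Dedekind complete, let Q : E → H be a Riesz homomorphism, let S : H → F be a positive linear operator, and let T : E → F be a positive linear operator such that T(x) ≤ S(Q(x)) for every x ∈ E with x ≥ 0. Then T admits a factorization T = S₁ ∘ Q, where S₁ : H → F is a linear operator with 0 ≤ S₁ ≤ S (i.e., 0 ≤ S₁(y) ≤ S(y) for every y ∈ H with y ≥ 0). -/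
/-!
Put `p y = S y⁺`; it is sublinear on `H`. Since `Q x⁺ = (Q x)⁺`, the operator `T` kills `ker Q`
(there `0 ≤ T x⁺ ≤ S 0 = 0`), so `T` descends to a linear map on `range Q`, and on it
`T x ≤ T x⁺ ≤ S (Q x)⁺ = p (Q x)`. The Hahn–Banach–Kantorovich theorem, i.e. Hahn–Banach with
values in a Dedekind complete space (one-step extensions choose the new value as a supremum, then
Zorn's lemma), extends this map to `S₁ : H → F` with `S₁ ≤ p`. For `y ≥ 0` this gives
`S₁ y ≤ S y` and `-S₁ y = S₁ (-y) ≤ S 0 = 0`.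
-/

open Set Submodule LinearMap

namespace LinearPMap

section

variable {K E G : Type*} [Field K] [AddCommGroup E] [Module K E] [AddCommGroup G] [Module K G]

theorem lt_supSpanSingleton (f : E →ₗ.[K] G) {y : E} (c : G) (hy : y ∉ f.domain) :
    f < f.supSpanSingleton y c hy := by
  refine lt_of_le_of_ne (f.left_le_sup _ _) fun h => hy ?_
  have : y ∈ (f.supSpanSingleton y c hy).domain := mem_sup_right (mem_span_singleton_self y)
  rwa [← h] at this

end

variable {H F : Type*} [AddCommGroup H] [Module ℝ H] [AddCommGroup F] [Module ℝ F]

section PartialOrder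

variable [PartialOrder F] {p : H → F}

theorem sSup_apply_le {c : Set (H →ₗ.[ℝ] F)} (hne : c.Nonempty) (hc : DirectedOn (· ≤ ·) c)
    (hcp : ∀ f ∈ c, ∀ x : f.domain, f x ≤ p x) (x : (LinearPMap.sSup c hc).domain) :
    LinearPMap.sSup c hc x ≤ p x := by
  obtain ⟨x, hx⟩ := x
  have hdir : DirectedOn (· ≤ ·) (domain '' c) :=
    directedOn_image.2 (hc.mono domain_mono.monotone)
  obtain ⟨_, ⟨f, hfc, rfl⟩, hfx⟩ := (mem_sSup_of_directed (hne.image _) hdir).1 hx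
  calc LinearPMap.sSup c hc ⟨x, hx⟩ = f ⟨x, hfx⟩ := LinearPMap.sSup_apply hc hfc ⟨x, hfx⟩
    _ ≤ p x := hcp f hfc _

variable [PosSMulMono ℝ F]

theorem add_smul_le_of_forall_add_le (p_smul : ∀ t : ℝ, 0 < t → ∀ y, p (t • y) = t • p y)
    {f : H →ₗ.[ℝ] F} {y : H} {c : F} (hc : ∀ x : f.domain, f x + c ≤ p (x + y))
    (x : f.domain) {r : ℝ} (hr : 0 < r) : f x + r • c ≤ p (x + r • y) := by
  have h := smul_le_smul_of_nonneg_left (hc (r⁻¹ • x)) hr.le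
  rwa [smul_add, f.map_smul, smul_inv_smul₀ hr.ne', ← p_smul r hr, smul_add,
    Submodule.coe_smul, smul_inv_smul₀ hr.ne'] at h

theorem supSpanSingleton_apply_le (p_smul : ∀ t : ℝ, 0 < t → ∀ y, p (t • y) = t • p y)
    {f : H →ₗ.[ℝ] F} (hf : ∀ x : f.domain, f x ≤ p x) {y : H} (hy : y ∉ f.domain) {c : F}
    (hc_add : ∀ x : f.domain, f x + c ≤ p (x + y))
    (hc_sub : ∀ x : f.domain, f x + -c ≤ p (x + -y)) (z : (f.supSpanSingleton y c hy).domain) :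
    f.supSpanSingleton y c hy z ≤ p z := by
  obtain ⟨z, hz⟩ := z
  obtain ⟨x, hx, _, hy', rfl⟩ := mem_sup.1 hz
  obtain ⟨r, rfl⟩ := mem_span_singleton.1 hy'
  rw [supSpanSingleton_apply_mk _ _ _ _ _ hx, RingHom.id_apply]
  rcases lt_trichotomy r 0 with hr | rfl | hr
  · simpa only [smul_neg, neg_smul, neg_neg] using
      add_smul_le_of_forall_add_le p_smul hc_sub ⟨x, hx⟩ (neg_pos.2 hr)
  · simpa only [zero_smul, add_zero] using hf ⟨x, hx⟩
  · exact add_smul_le_of_forall_add_le p_smul hc_add ⟨x, hx⟩ hr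

end PartialOrder

variable [Lattice F] [AddLeftMono F] [PosSMulMono ℝ F] {p : H → F}

theorem exists_lt_forall_le_of_domain_ne_top
    (hF : ∀ D : Set F, D.Nonempty → BddAbove D → ∃ s : F, IsLUB D s)
    (p_add : ∀ a b, p (a + b) ≤ p a + p b) (p_smul : ∀ t : ℝ, 0 < t → ∀ y, p (t • y) = t • p y)
    {f : H →ₗ.[ℝ] F} (hf : ∀ x : f.domain, f x ≤ p x) (hdom : f.domain ≠ ⊤) :
    ∃ g, f < g ∧ ∀ x : g.domain, g x ≤ p x := by
  obtain ⟨y, -, hy⟩ : ∃ y ∈ (⊤ : Submodule ℝ H), y ∉ f.domain :=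
    SetLike.exists_of_lt (lt_top_iff_ne_top.2 hdom)
  have key (x x' : f.domain) : f x - p (x - y) ≤ p (x' + y) - f x' := by
    rw [sub_le_sub_iff, ← f.map_add]
    calc f (x + x') ≤ p (x + x') := hf _
      _ = p ((x' + y) + (x - y)) := by congr 1; abel
      _ ≤ p (x' + y) + p (x - y) := p_add _ _
  obtain ⟨c, hc⟩ := hF (range fun x : f.domain => f x - p (x - y)) (range_nonempty _)
    ⟨_, forall_mem_range.2 fun x => key x 0⟩
  refine ⟨f.supSpanSingleton y c hy, f.lt_supSpanSingleton c hy,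
    supSpanSingleton_apply_le p_smul hf hy (fun x => ?_) (fun x => ?_)⟩
  · rw [← le_sub_iff_add_le']
    exact hc.2 (forall_mem_range.2 fun x' => key x' x)
  · rw [← sub_eq_add_neg, ← sub_eq_add_neg, sub_le_comm]
    exact hc.1 (mem_range_self x)

theorem exists_extension_of_le_sublinear
    (hF : ∀ D : Set F, D.Nonempty → BddAbove D → ∃ s : F, IsLUB D s)
    (p_add : ∀ a b, p (a + b) ≤ p a + p b) (p_smul : ∀ t : ℝ, 0 < t → ∀ y, p (t • y) = t • p y)
    (f : H →ₗ.[ℝ] F) (hf : ∀ x : f.domain, f x ≤ p x) :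
    ∃ g : H →ₗ[ℝ] F, (∀ x : f.domain, g x = f x) ∧ ∀ x, g x ≤ p x := by
  obtain ⟨q, hfq, hq⟩ := zorn_le_nonempty₀ {g : H →ₗ.[ℝ] F | ∀ x : g.domain, g x ≤ p x}
    (fun c hcp hchain g hg => ⟨LinearPMap.sSup c hchain.directedOn,
      sSup_apply_le ⟨g, hg⟩ _ hcp, fun _ => LinearPMap.le_sSup _⟩) f hf
  have hq_top : q.domain = ⊤ := by
    by_contra hne
    obtain ⟨g, hqg, hg⟩ := exists_lt_forall_le_of_domain_ne_top hF p_add p_smul hq.prop hne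
    exact hqg.ne (hq.eq_of_le hg hqg.le)
  exact ⟨q.toFun ∘ₗ LinearMap.id.codRestrict q.domain fun x => hq_top ▸ trivial,
    fun x => (hfq.2 rfl).symm, fun x => hq.prop _⟩

end LinearPMap

theorem posPart_add_le {α : Type*} [Lattice α] [AddCommGroup α] [AddLeftMono α] (a b : α) :
    (a + b)⁺ ≤ a⁺ + b⁺ :=
  sup_le (add_le_add (le_posPart a) (le_posPart b))
    (add_nonneg (posPart_nonneg a) (posPart_nonneg b))

theorem posPart_smul_of_pos_s19 {M : Type*} [AddCommGroup M] [Lattice M] [Module ℝ M]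
    [PosSMulMono ℝ M] {t : ℝ} (ht : 0 < t) (a : M) : (t • a)⁺ = t • a⁺ := by
  simpa only [posPart_def, OrderIso.smulRight_apply, smul_zero] using
    ((OrderIso.smulRight ht).map_sup a 0).symm

namespace LinearMap

variable {R E H F : Type*} [Ring R] [AddCommGroup E] [Module R E] [AddCommGroup H] [Module R H]
  [AddCommGroup F] [Module R F]

noncomputable def factorThroughRange (Q : E →ₗ[R] H) (T : E →ₗ[R] F) (h : ker Q ≤ ker T) :
    H →ₗ.[R] F :=
  ⟨range Q, (ker Q).liftQ T h ∘ₗ Q.quotKerEquivRange.symm.toLinearMap⟩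

theorem factorThroughRange_apply (Q : E →ₗ[R] H) (T : E →ₗ[R] F) (h : ker Q ≤ ker T) (x : E) :
    Q.factorThroughRange T h ⟨Q x, mem_range_self Q x⟩ = T x := by
  simp [factorThroughRange, quotKerEquivRange_symm_apply_image]

theorem monotone_of_map_nonneg [Preorder E] [Preorder F] [AddLeftMono E] [AddLeftMono F]
    (S : E →ₗ[R] F) (hS : ∀ x, 0 ≤ x → 0 ≤ S x) : Monotone S := fun a b hab => by
  simpa using hS (b - a) (sub_nonneg.2 hab)

end LinearMap

section RieszHomomorphism

variable {E H F : Type*} [AddCommGroup E] [Lattice E] [Module ℝ E]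
  [AddCommGroup H] [Lattice H] [Module ℝ H] [AddCommGroup F] [Lattice F] [Module ℝ F]
  {Q : E →ₗ[ℝ] H} {S : H →ₗ[ℝ] F} {T : E →ₗ[ℝ] F}

theorem map_posPart_of_map_sup (hQ : ∀ x y : E, Q (x ⊔ y) = Q x ⊔ Q y) (x : E) :
    Q x⁺ = (Q x)⁺ := by
  rw [posPart_def, hQ, map_zero, posPart_def]

theorem ker_le_ker_of_le_comp [AddLeftMono E] (hQ : ∀ x y : E, Q (x ⊔ y) = Q x ⊔ Q y)
    (hT : ∀ x, 0 ≤ x → 0 ≤ T x) (hTS : ∀ x, 0 ≤ x → T x ≤ S (Q x)) : ker Q ≤ ker T := by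
  have map_posPart_eq_zero {x : E} (hx : Q x = 0) : T x⁺ = 0 := by
    refine le_antisymm ?_ (hT _ (posPart_nonneg x))
    simpa [map_posPart_of_map_sup hQ, hx] using hTS _ (posPart_nonneg x)
  intro x hx
  rw [mem_ker] at hx ⊢
  have hx' : Q (-x) = 0 := by rw [map_neg, hx, neg_zero]
  rw [← posPart_sub_negPart x, map_sub, map_posPart_eq_zero hx, ← posPart_neg,
    map_posPart_eq_zero hx', sub_zero]

theorem le_map_posPart_of_le_comp [AddLeftMono E] [AddLeftMono F]
    (hQ : ∀ x y : E, Q (x ⊔ y) = Q x ⊔ Q y) (hT : ∀ x, 0 ≤ x → 0 ≤ T x)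
    (hTS : ∀ x, 0 ≤ x → T x ≤ S (Q x)) (x : E) : T x ≤ S (Q x)⁺ :=
  calc T x ≤ T x⁺ := T.monotone_of_map_nonneg hT (le_posPart x)
    _ ≤ S (Q x⁺) := hTS _ (posPart_nonneg x)
    _ = S (Q x)⁺ := by rw [map_posPart_of_map_sup hQ]

end RieszHomomorphism

theorem stmt_19_general {E H F : Type*}
    [AddCommGroup E] [Lattice E] [Module ℝ E]
    [CovariantClass E E (· + ·) (· ≤ ·)]
    [AddCommGroup H] [Lattice H] [Module ℝ H]
    [CovariantClass H H (· + ·) (· ≤ ·)] [PosSMulMono ℝ H]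
    [AddCommGroup F] [Lattice F] [Module ℝ F]
    [CovariantClass F F (· + ·) (· ≤ ·)] [PosSMulMono ℝ F]
    -- `F` is Dedekind complete
    (hF : ∀ D : Set F, D.Nonempty → BddAbove D → ∃ s : F, IsLUB D s)
    (Q : E →ₗ[ℝ] H) (hQ : ∀ x y : E, Q (x ⊔ y) = Q x ⊔ Q y)
    (S : H →ₗ[ℝ] F) (hS : ∀ y : H, 0 ≤ y → 0 ≤ S y)
    (T : E →ₗ[ℝ] F) (hTpos : ∀ x : E, 0 ≤ x → 0 ≤ T x)
    (hTS : ∀ x : E, 0 ≤ x → T x ≤ S (Q x)) :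
    ∃ S₁ : H →ₗ[ℝ] F, (∀ x : E, T x = S₁ (Q x)) ∧
      ∀ y : H, 0 ≤ y → 0 ≤ S₁ y ∧ S₁ y ≤ S y := by
  have hker := ker_le_ker_of_le_comp hQ hTpos hTS
  obtain ⟨S₁, hS₁T, hS₁S⟩ := LinearPMap.exists_extension_of_le_sublinear (p := fun y => S y⁺) hF
    (fun a b => (S.monotone_of_map_nonneg hS (posPart_add_le a b)).trans_eq (map_add S _ _))
    (fun t ht y => by rw [posPart_smul_of_pos_s19 ht, map_smul])
    (Q.factorThroughRange T hker)
    (by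
      rintro ⟨_, x, rfl⟩
      rw [factorThroughRange_apply]
      exact le_map_posPart_of_le_comp hQ hTpos hTS x)
  refine ⟨S₁, fun x => ((hS₁T ⟨Q x, mem_range_self Q x⟩).trans
    (Q.factorThroughRange_apply T hker x)).symm, fun y hy => ⟨?_, ?_⟩⟩
  · simpa [posPart_neg, negPart_eq_zero.2 hy] using hS₁S (-y)
  · simpa [posPart_eq_self.2 hy] using hS₁S y

/-- Let `E, H, F` be Riesz spaces with `F` Dedekind complete,
`Q : E → H` a Riesz homomorphism, `S : H → F` a positive operator and
`T : E → F` a positive operator with `T x ≤ S (Q x)` for all `x ≥ 0`.  Then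
`T = S₁ ∘ Q` for some linear operator `S₁ : H → F` with `0 ≤ S₁ ≤ S`. -/
theorem stmt_19 {E H F : Type*}
    [AddCommGroup E] [Lattice E] [Module ℝ E]
    [CovariantClass E E (· + ·) (· ≤ ·)] [PosSMulMono ℝ E]
    [AddCommGroup H] [Lattice H] [Module ℝ H]
    [CovariantClass H H (· + ·) (· ≤ ·)] [PosSMulMono ℝ H]
    [AddCommGroup F] [Lattice F] [Module ℝ F]
    [CovariantClass F F (· + ·) (· ≤ ·)] [PosSMulMono ℝ F]
    -- `F` is Dedekind complete
    (hF : ∀ D : Set F, D.Nonempty → BddAbove D → ∃ s : F, IsLUB D s)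
    (Q : E →ₗ[ℝ] H) (hQ : ∀ x y : E, Q (x ⊔ y) = Q x ⊔ Q y)
    (S : H →ₗ[ℝ] F) (hS : ∀ y : H, 0 ≤ y → 0 ≤ S y)
    (T : E →ₗ[ℝ] F) (hTpos : ∀ x : E, 0 ≤ x → 0 ≤ T x)
    (hTS : ∀ x : E, 0 ≤ x → T x ≤ S (Q x)) :
    ∃ S₁ : H →ₗ[ℝ] F, (∀ x : E, T x = S₁ (Q x)) ∧
      ∀ y : H, 0 ≤ y → 0 ≤ S₁ y ∧ S₁ y ≤ S y :=
  stmt_19_general hF Q hQ S hS T hTpos hTS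
end
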